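/- arXiv:1507.03843 — 8 statements merged into one kernel-verified Lean document; each statement's English description precedes it below -/
import Mathlib

section
/- Let a stationary memoryless channel with input alphabet 𝒳, output alphabet 𝒴, Markov kernel P_{Y|X}, cost function b and zero-cost symbol 0 be given. For every N ∈ ℕ, every ε ∈ (0,1), every τ ∈ (0,ε), every input symbol x₀ ∈ 𝒳 with b(x₀) > 0, and every integer M ≥ 1 satisfying (M−1)·β_{1−ε+τ}(P_{Y|X=x₀}^{⊗N}, P_{Y|X=0}^{⊗N}) ≤ τ, there exists an (E, M, ε)-code with E = N·b(x₀). Here P^{⊗N}_{Y|X=x} denotes the N-fold product measure of P_{Y|X=x} on 𝒴^N. -/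
open MeasureTheory ProbabilityTheory

/-- `μ` is the countable product of the probability measures `ν i`: it is a probability
measure giving every finite-dimensional cylinder set the product of the coordinate
probabilities. -/
def IsPiNat {Y : Type*} [MeasurableSpace Y] (ν : ℕ → Measure Y) (μ : Measure (ℕ → Y)) : Prop :=
  IsProbabilityMeasure μ ∧
    ∀ (s : Finset ℕ) (A : ℕ → Set Y), (∀ i, MeasurableSet (A i)) →
      μ {y | ∀ i ∈ s, y i ∈ A i} = ∏ i ∈ s, ν i (A i)

/-- An `(E, M, ε)` code for the stationary memoryless channel with kernel `κ` and
cost function `b`: `M` codewords (infinite sequences of input symbols), each of total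
cost at most `E`, and a measurable decoder whose error probability under the output
distribution induced by each codeword is at most `ε`. -/
structure Code {X Y : Type*} [MeasurableSpace X] [MeasurableSpace Y]
    (κ : Kernel X Y) (b : X → ℝ) (E : ℝ) (M : ℕ) (ε : ℝ) where
  enc : Fin M → ℕ → X
  dec : (ℕ → Y) → Fin M
  meas_dec : Measurable dec
  cost : ∀ j, (∑' i, ENNReal.ofReal (b (enc j i))) ≤ ENNReal.ofReal E
  err : ∀ (j : Fin M) (μ : Measure (ℕ → Y)),
      IsPiNat (fun i => κ (enc j i)) μ → μ {y | dec y ≠ j} ≤ ENNReal.ofReal ε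

/-- `β_α(P, Q)`: the smallest `Q`-average of a `[0,1]`-valued measurable test whose
`P`-average is at least `α`. -/
noncomputable def betaFn {Ω : Type*} [MeasurableSpace Ω] (α : ℝ) (P Q : Measure Ω) : ℝ :=
  ⨅ f : {f : Ω → ℝ // Measurable f ∧ (∀ ω, f ω ∈ Set.Icc (0 : ℝ) 1) ∧ α ≤ ∫ ω, f ω ∂P},
    ∫ ω, f.1 ω ∂Q

/-!
Pulse-position modulation. Codeword `j` sends `x₀` during the `j`-th block of `N` channel uses
and the zero-cost symbol everywhere else, so it costs `N b(x₀)`, and the output of block `k` has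
law `P = P_{Y|X=x₀}^{⊗N}` if `k = j` and `Q = P_{Y|X=0}^{⊗N}` otherwise. Fix a set `A` and let the
decoder output any block whose output lies in `A`; by the union bound it errs at `j` with
probability at most `P(Aᶜ) + (M - 1) Q(A)`. The randomized tests in `β` cannot be used by a
deterministic decoder, but they do not beat a deterministic one: the positive set `A` of a Hahn
decomposition of `P - (M - 1) Q` maximizes `∫ f dP - (M - 1) ∫ f dQ` over all tests `f`, hence
`P(A) - (M - 1) Q(A) ≥ α - (M - 1) β_α(P, Q) ≥ α - τ` for `α = 1 - ε + τ`, and the error is at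
most `ε`.
-/

section NeymanPearson

variable {Ω : Type*} [MeasurableSpace Ω]

lemma integrable_of_mem_Icc {μ : Measure Ω} [IsFiniteMeasure μ] {f : Ω → ℝ}
    (hf : Measurable f) (h01 : ∀ ω, f ω ∈ Set.Icc (0 : ℝ) 1) : Integrable f μ :=
  .of_bound hf.aestronglyMeasurable 1 <| ae_of_all _ fun ω => by
    rw [Real.norm_of_nonneg (h01 ω).1]; exact (h01 ω).2

lemma setIntegral_mono_measure_of_le_on {μ ν : Measure Ω} {s : Set Ω} (hs : MeasurableSet s)
    (hle : ∀ t, MeasurableSet t → t ⊆ s → μ t ≤ ν t) {f : Ω → ℝ} (hf : 0 ≤ f)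
    (hfi : Integrable f ν) :
    ∫ x in s, f x ∂μ ≤ ∫ x in s, f x ∂ν := by
  refine integral_mono_measure (Measure.le_iff.2 fun t ht => ?_) (ae_of_all _ hf) hfi.restrict
  rw [Measure.restrict_apply ht, Measure.restrict_apply ht]
  exact hle _ (ht.inter hs) Set.inter_subset_right

lemma exists_measurableSet_integral_sub_mul_le (P Q : Measure Ω) [IsFiniteMeasure P]
    [IsFiniteMeasure Q] {c : ℝ} (hc : 0 ≤ c) :
    ∃ A : Set Ω, MeasurableSet A ∧ ∀ f : Ω → ℝ, Measurable f → (∀ ω, f ω ∈ Set.Icc 0 1) →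
      ∫ ω, f ω ∂P - c * ∫ ω, f ω ∂Q ≤ P.real A - c * Q.real A := by
  obtain ⟨A, hA, hQP, hPQ⟩ := hahn_decomposition P (c.toNNReal • Q)
  refine ⟨A, hA, fun f hf h01 => ?_⟩
  have hsmul (g : Ω → ℝ) (s : Set Ω) :
      ∫ ω in s, g ω ∂(c.toNNReal • Q) = c * ∫ ω in s, g ω ∂Q := by
    rw [Measure.restrict_smul, integral_smul_nnreal_measure, NNReal.smul_def,
      Real.coe_toNNReal c hc, smul_eq_mul]
  have hfP : Integrable f P := integrable_of_mem_Icc hf h01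
  have hfQ : Integrable f Q := integrable_of_mem_Icc hf h01
  have hcompl : ∫ ω in Aᶜ, f ω ∂P ≤ c * ∫ ω in Aᶜ, f ω ∂Q := by
    rw [← hsmul]
    exact setIntegral_mono_measure_of_le_on hA.compl hPQ (fun ω => (h01 ω).1)
      (integrable_of_mem_Icc hf h01)
  have hpos : c * ∫ ω in A, (1 - f ω) ∂Q ≤ ∫ ω in A, (1 - f ω) ∂P := by
    rw [← hsmul]
    exact setIntegral_mono_measure_of_le_on hA hQP (fun ω => sub_nonneg.2 (h01 ω).2)
      ((integrable_const 1).sub hfP)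
  rw [integral_sub (integrable_const _) hfP.restrict, integral_sub (integrable_const _) hfQ.restrict,
    setIntegral_const, setIntegral_const, smul_eq_mul, smul_eq_mul, mul_one, mul_one] at hpos
  rw [← integral_add_compl hA hfP, ← integral_add_compl hA hfQ]
  linarith

lemma exists_measurableSet_sub_mul_betaFn_le (P Q : Measure Ω) [IsProbabilityMeasure P]
    [IsProbabilityMeasure Q] {c α : ℝ} (hc : 0 ≤ c) (hα : α ≤ 1) :
    ∃ A : Set Ω, MeasurableSet A ∧ α - c * betaFn α P Q ≤ P.real A - c * Q.real A := by
  obtain ⟨A, hA, hmax⟩ := exists_measurableSet_integral_sub_mul_le P Q hc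
  refine ⟨A, hA, ?_⟩
  have : Nonempty {f : Ω → ℝ // Measurable f ∧ (∀ ω, f ω ∈ Set.Icc (0 : ℝ) 1) ∧
      α ≤ ∫ ω, f ω ∂P} :=
    ⟨⟨1, measurable_const, fun _ => ⟨zero_le_one, le_rfl⟩, by simpa using hα⟩⟩
  suffices α - (P.real A - c * Q.real A) ≤ c * betaFn α P Q by linarith
  rw [betaFn, Real.mul_iInf_of_nonneg hc]
  exact le_ciInf fun ⟨f, hf, h01, hαf⟩ => by linarith [hmax f hf h01]

lemma measure_compl_add_mul_le_ofReal {P Q : Measure Ω}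
    [IsProbabilityMeasure P] [IsFiniteMeasure Q] {A : Set Ω} (hA : MeasurableSet A) (n : ℕ)
    {ε : ℝ} (h : 1 - ε ≤ P.real A - n * Q.real A) :
    P Aᶜ + n * Q A ≤ ENNReal.ofReal ε := by
  rw [← ofReal_measureReal, ← ofReal_measureReal (μ := Q), probReal_compl_eq_one_sub hA,
    ← ENNReal.ofReal_natCast, ← ENNReal.ofReal_mul (Nat.cast_nonneg _),
    ← ENNReal.ofReal_add (sub_nonneg.2 measureReal_le_one) (by positivity)]
  exact ENNReal.ofReal_le_ofReal (by linarith)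

end NeymanPearson

lemma exists_measurable_decoder_union_bound {Ω ι : Type*} [MeasurableSpace Ω]
    [MeasurableSpace ι] [Fintype ι] [DecidableEq ι] [Nonempty ι] {D : ι → Set Ω}
    (hD : ∀ k, MeasurableSet (D k)) :
    ∃ g : Ω → ι, Measurable g ∧ ∀ (μ : Measure Ω) (j : ι),
      μ {ω | g ω ≠ j} ≤ μ (D j)ᶜ + ∑ k ∈ Finset.univ.erase j, μ (D k) := by
  classical
  let φ : (ι → Prop) → ι := fun v => if h : ∃ k, v k then h.choose else Classical.arbitrary ι
  refine ⟨fun ω => φ (fun k => ω ∈ D k),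
    (Measurable.of_discrete (f := φ)).comp (measurable_pi_lambda _ fun k => (hD k).mem),
    fun μ j => ?_⟩
  have hsub : {ω | φ (fun k => ω ∈ D k) ≠ j} ⊆ (D j)ᶜ ∪ ⋃ k ∈ Finset.univ.erase j, D k := by
    intro ω hω
    by_contra hmem
    simp only [Set.mem_union, Set.mem_compl_iff, Set.mem_iUnion, Finset.mem_erase, not_or,
      not_not, not_exists] at hmem
    have h : ∃ k, ω ∈ D k := ⟨j, hmem.1⟩
    refine hω ?_
    simp only [φ, dif_pos h]
    by_contra hne
    exact hmem.2 _ ⟨hne, Finset.mem_univ _⟩ h.choose_spec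
  exact (measure_mono hsub).trans <| (measure_union_le _ _).trans <|
    add_le_add_right (measure_biUnion_finset_le _ _) _

lemma IsPiNat.map_comp {Y ι : Type*} [MeasurableSpace Y] [Fintype ι] {ν : ℕ → Measure Y}
    [∀ i, SigmaFinite (ν i)] {μ : Measure (ℕ → Y)} (hμ : IsPiNat ν μ) {e : ι → ℕ}
    (he : e.Injective) :
    μ.map (fun y t => y (e t)) = Measure.pi fun t => ν (e t) := by
  classical
  refine (Measure.pi_eq fun s hs => ?_).symm
  -- `A` constrains coordinate `e t` to `s t` and is `univ` off the range of `e`.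
  set A : ℕ → Set Y := fun i => ⋂ (t) (_ : e t = i), s t
  have hA : ∀ t, A (e t) = s t := fun t => by
    ext; simp [A, he.eq_iff]
  have hpre : (fun (y : ℕ → Y) t => y (e t)) ⁻¹' Set.univ.pi s
      = {y : ℕ → Y | ∀ i ∈ Finset.univ.image e, y i ∈ A i} := by
    ext y; simp [A, he.eq_iff]
  rw [Measure.map_apply (by fun_prop) (.univ_pi hs), hpre,
    hμ.2 _ A fun i => .iInter fun t => .iInter fun _ => hs t, Finset.prod_image he.injOn]
  simp only [hA]

section PulsePosition

variable {X : Type*}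

def ppmCodeword (N : ℕ) (x₁ x₀ : X) (j i : ℕ) : X :=
  if i ∈ Finset.Ico (j * N) (j * N + N) then x₁ else x₀

lemma ppmCodeword_mul_add {N t : ℕ} (x₁ x₀ : X) (j k : ℕ) (ht : t < N) :
    ppmCodeword N x₁ x₀ j (k * N + t) = if k = j then x₁ else x₀ := by
  have hblock : k * N + t ∈ Finset.Ico (j * N) (j * N + N) ↔ k = j := by
    rw [Finset.mem_Ico]
    constructor
    · rintro ⟨h₁, h₂⟩
      have hkj : k < j + 1 := Nat.lt_of_mul_lt_mul_right (a := N) (by linarith)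
      have hjk : j < k + 1 := Nat.lt_of_mul_lt_mul_right (a := N) (by linarith)
      omega
    · rintro rfl
      omega
  simp only [ppmCodeword, hblock]

lemma tsum_ofReal_ppmCodeword (b : X → ℝ) {x₀ : X} (hx₀ : b x₀ = 0) (N : ℕ) (x₁ : X)
    (j : ℕ) :
    ∑' i, ENNReal.ofReal (b (ppmCodeword N x₁ x₀ j i)) = ENNReal.ofReal (N * b x₁) := by
  rw [tsum_eq_sum (s := Finset.Ico (j * N) (j * N + N)) fun i hi => by simp [ppmCodeword, hi, hx₀],
    Finset.sum_congr rfl fun i hi => by rw [ppmCodeword, if_pos hi], Finset.sum_const,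
    Nat.card_Ico, Nat.add_sub_cancel_left, nsmul_eq_mul, ENNReal.ofReal_mul (Nat.cast_nonneg _),
    ENNReal.ofReal_natCast]

lemma IsPiNat.measure_ppmCodeword_block {Y : Type*} [MeasurableSpace X] [MeasurableSpace Y]
    {κ : Kernel X Y} [IsMarkovKernel κ] {N : ℕ} {x₁ x₀ : X} {j : ℕ} {μ : Measure (ℕ → Y)}
    (hμ : IsPiNat (fun i => κ (ppmCodeword N x₁ x₀ j i)) μ) (k : ℕ) {A : Set (Fin N → Y)}
    (hA : MeasurableSet A) :
    μ ((fun y (t : Fin N) => y (k * N + t)) ⁻¹' A)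
      = Measure.pi (fun _ : Fin N => κ (if k = j then x₁ else x₀)) A := by
  have he : (fun t : Fin N => k * N + t).Injective := fun s t hst =>
    Fin.ext (Nat.add_left_cancel hst)
  rw [← Measure.map_apply (by fun_prop) hA, hμ.map_comp he]
  simp only [ppmCodeword_mul_add _ _ _ _ (Fin.isLt _)]

end PulsePosition

theorem achievability_kappa_beta_general
    {X Y : Type*} [MeasurableSpace X] [MeasurableSpace Y]
    (κ : Kernel X Y) [IsMarkovKernel κ] (b : X → ℝ)
    (x_zero : X) (hzero : b x_zero = 0)
    (N : ℕ) (ε τ : ℝ) (hτ : τ ∈ Set.Ioo (0 : ℝ) ε)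
    (x₀ : X)
    (M : ℕ) (hM : 1 ≤ M)
    (hbeta : ((M : ℝ) - 1) *
        betaFn (1 - ε + τ) (Measure.pi fun _ : Fin N => κ x₀)
          (Measure.pi fun _ : Fin N => κ x_zero) ≤ τ) :
    Nonempty (Code κ b ((N : ℝ) * b x₀) M ε) := by
  set P := Measure.pi fun _ : Fin N => κ x₀
  set Q := Measure.pi fun _ : Fin N => κ x_zero
  have hM' : (0 : ℝ) ≤ M - 1 := sub_nonneg.2 (Nat.one_le_cast.2 hM)
  obtain ⟨A, hA, hPQ⟩ := exists_measurableSet_sub_mul_betaFn_le P Q hM' (α := 1 - ε + τ)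
    (by linarith [hτ.2])
  have : Nonempty (Fin M) := ⟨⟨0, hM⟩⟩
  obtain ⟨dec, hdec, herr⟩ := exists_measurable_decoder_union_bound
    (D := fun k : Fin M => (fun (y : ℕ → Y) (t : Fin N) => y (k * N + t)) ⁻¹' A)
    fun _ => hA.preimage (by fun_prop)
  refine ⟨⟨fun j => ppmCodeword N x₀ x_zero j, dec, hdec,
    fun j => (tsum_ofReal_ppmCodeword b hzero N x₀ j).le, fun j μ hμ => (herr μ j).trans ?_⟩⟩
  rw [← Set.preimage_compl, hμ.measure_ppmCodeword_block _ hA.compl, if_pos rfl,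
    Finset.sum_congr rfl fun k hk => by
      rw [hμ.measure_ppmCodeword_block _ hA, if_neg (Fin.val_ne_of_ne (Finset.ne_of_mem_erase hk))]]
  rw [Finset.sum_const, Finset.card_erase_of_mem (Finset.mem_univ _), Finset.card_univ,
    Fintype.card_fin, nsmul_eq_mul]
  refine measure_compl_add_mul_le_ofReal hA _ ?_
  rw [Nat.cast_sub hM, Nat.cast_one]
  linarith

theorem achievability_kappa_beta
    {X Y : Type*} [MeasurableSpace X] [MeasurableSpace Y]
    (κ : Kernel X Y) [IsMarkovKernel κ] (b : X → ℝ) (hb : ∀ x, 0 ≤ b x)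
    (x_zero : X) (hzero : b x_zero = 0)
    (N : ℕ) (ε τ : ℝ) (hε : ε ∈ Set.Ioo (0 : ℝ) 1) (hτ : τ ∈ Set.Ioo (0 : ℝ) ε)
    (x₀ : X) (hx₀ : 0 < b x₀)
    (M : ℕ) (hM : 1 ≤ M)
    (hbeta : ((M : ℝ) - 1) *
        betaFn (1 - ε + τ) (Measure.pi fun _ : Fin N => κ x₀)
          (Measure.pi fun _ : Fin N => κ x_zero) ≤ τ) :
    Nonempty (Code κ b ((N : ℝ) * b x₀) M ε) :=
  achievability_kappa_beta_general κ b x_zero hzero N ε τ hτ x₀ M hM hbeta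
end

section
/- Let a stationary memoryless channel with input alphabet 𝒳, output alphabet 𝒴, Markov kernel P_{Y|X}, cost function b and zero-cost symbol 0 be given, and let x₀ ∈ 𝒳 satisfy b(x₀) > 0 and P_{Y|X=x₀} ≪ P_{Y|X=0}. For every N ∈ ℕ and every integer M ≥ 1, there exists an (E, M, ε')-code with E = N·b(x₀) whose maximal error probability ε' satisfies ε' ≤ ∫ min{ 1, (M−1)·P^{⊗N}_{Y|X=0}[{ŷ ∈ 𝒴^N : i_N(x₀; ŷ) ≥ i_N(x₀; y)}] } dP^{⊗N}_{Y|X=x₀}(y), where i_N(x₀; y) = ln (dP^{⊗N}_{Y|X=x₀} / dP^{⊗N}_{Y|X=0})(y) and P^{⊗N}_{Y|X=x} denotes the N-fold product measure of P_{Y|X=x} on 𝒴^N. -/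
open MeasureTheory ProbabilityTheory

/-- The information density `ln (dP/dQ)(y)`. -/
noncomputable def iDen {Ω : Type*} [MeasurableSpace Ω] (P Q : Measure Ω) (y : Ω) : ℝ :=
  Real.log ((P.rnDeriv Q) y).toReal

/-!
Pulse-position coding: codeword `j` spends its whole budget `N * b x₀` by sending `x₀` during its
own block of `N` channel uses and `x_zero` elsewhere. Under codeword `j` the `M` output blocks are
independent, block `j` with law `P^N = (κ x₀)^⊗N` and every other block with law
`Q^N = (κ x_zero)^⊗N`. The decoder picks the block of largest information density, so it errs only
if another block scores at least as high; conditioning on block `j` and a union bound over the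
`M - 1` competitors give the integrand `min 1 ((M - 1) * Q^N {ŷ | i(y) ≤ i(ŷ)})`.
-/

open scoped ENNReal

namespace MeasureTheory.Measure

theorem infinitePi_map_comp_injective {ι α X : Type*} [MeasurableSpace X] (μ : ι → Measure X)
    [∀ i, IsProbabilityMeasure (μ i)] {c : α → ι} (hc : Function.Injective c) :
    (infinitePi μ).map (fun y a => y (c a)) = infinitePi fun a => μ (c a) := by
  set e : α ≃ Set.range c := Equiv.ofInjective c hc
  have hcomp : (fun (y : ι → X) a => y (c a)) =
      (MeasurableEquiv.piCongrLeft (fun _ => X) e).symm ∘ (Set.range c).domRestrict := by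
    ext y a
    simp [MeasurableEquiv.piCongrLeft, Equiv.piCongrLeft, e]
  rw [hcomp, ← map_map (by fun_prop) (by fun_prop), infinitePi_map_restrict',
    ← infinitePi_map_piCongrLeft (fun i : Set.range c => μ i) e,
    map_map (by fun_prop) (by fun_prop)]
  simp [e]

end MeasureTheory.Measure

namespace IsPiNat

variable {Y : Type*} [MeasurableSpace Y] {ν : ℕ → Measure Y} [∀ i, IsProbabilityMeasure (ν i)]
  {μ : Measure (ℕ → Y)}

theorem eq_infinitePi (hμ : IsPiNat ν μ) : μ = Measure.infinitePi ν :=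
  Measure.eq_infinitePi ν fun s t ht => hμ.2 s t ht

theorem map_blocks {ι τ : Type*} [Fintype ι] [Fintype τ] (hμ : IsPiNat ν μ)
    {c : ι × τ → ℕ} (hc : Function.Injective c) :
    μ.map (fun y k i => y (c (k, i))) = Measure.pi fun k => Measure.pi fun i => ν (c (k, i)) := by
  have hcomp : (fun (y : ℕ → Y) k i => y (c (k, i))) =
      MeasurableEquiv.curry ι τ Y ∘ fun y q => y (c q) := rfl
  rw [hμ.eq_infinitePi, hcomp, ← Measure.map_map (by fun_prop) (by fun_prop),
    Measure.infinitePi_map_comp_injective ν hc,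
    Measure.infinitePi_map_curry (fun k i => ν (c (k, i)))]
  simp only [Measure.infinitePi_eq_pi]

end IsPiNat

section UnionBound

variable {Z : Type*} [MeasurableSpace Z]

theorem measure_pi_exists_mem_le {ι : Type*} [Fintype ι] (Q : Measure Z) [IsProbabilityMeasure Q]
    {A : Set Z} (hA : MeasurableSet A) :
    (Measure.pi fun _ : ι => Q) {z | ∃ l, z l ∈ A} ≤ Fintype.card ι * Q A := by
  calc (Measure.pi fun _ : ι => Q) {z | ∃ l, z l ∈ A}
      = (Measure.pi fun _ : ι => Q) (⋃ l, Function.eval l ⁻¹' A) := by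
        congr 1; ext z; simp
    _ ≤ ∑' l, (Measure.pi fun _ : ι => Q) (Function.eval l ⁻¹' A) := measure_iUnion_le _
    _ = Fintype.card ι * Q A := by
        simp [tsum_fintype, (measurePreserving_eval (fun _ : ι => Q) _).measure_preimage
          hA.nullMeasurableSet]

theorem measure_pi_exists_ne_mem_le_lintegral {n : ℕ} (P Q : Measure Z)
    [IsProbabilityMeasure P] [IsProbabilityMeasure Q] {E : Set (Z × Z)} (hE : MeasurableSet E)
    (j : Fin (n + 1)) :
    Measure.pi (fun k => if k = j then P else Q) {w | ∃ k ≠ j, (w j, w k) ∈ E}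
      ≤ ∫⁻ y, min 1 (n * Q (Prod.mk y ⁻¹' E)) ∂P := by
  have hsplit := measurePreserving_piFinSuccAbove (fun k => if k = j then P else Q) j
  simp only [if_true, Fin.succAbove_ne, if_false] at hsplit
  set S : Set (Z × (Fin n → Z)) := {p | ∃ l, (p.1, p.2 l) ∈ E}
  have hS : MeasurableSet S := by
    simp only [S, Set.ofPred_exists]
    exact MeasurableSet.iUnion fun l =>
      hE.preimage (measurable_fst.prodMk ((measurable_pi_apply l).comp measurable_snd))
  have hpre : MeasurableEquiv.piFinSuccAbove (fun _ => Z) j ⁻¹' S =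
      {w | ∃ k ≠ j, (w j, w k) ∈ E} := by
    ext w
    change (∃ l, (w j, w (j.succAbove l)) ∈ E) ↔ _
    constructor
    · rintro ⟨l, hl⟩
      exact ⟨_, Fin.succAbove_ne j l, hl⟩
    · rintro ⟨k, hk, hw⟩
      obtain ⟨l, rfl⟩ := Fin.exists_succAbove_eq hk
      exact ⟨l, hw⟩
  calc Measure.pi (fun k => if k = j then P else Q) {w | ∃ k ≠ j, (w j, w k) ∈ E}
      = (P.prod (Measure.pi fun _ : Fin n => Q)) S := by
        rw [← hpre, hsplit.measure_preimage hS.nullMeasurableSet]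
    _ = ∫⁻ y, (Measure.pi fun _ : Fin n => Q) (Prod.mk y ⁻¹' S) ∂P := Measure.prod_apply hS
    _ ≤ ∫⁻ y, min 1 (n * Q (Prod.mk y ⁻¹' E)) ∂P := by
        refine lintegral_mono fun y => le_min prob_le_one ?_
        have := measure_pi_exists_mem_le (ι := Fin n) Q (measurable_prodMk_left (x := y) hE)
        rwa [Fintype.card_fin] at this

theorem ofReal_integral_min_one_mul (P : Measure Z) [IsFiniteMeasure P] (n : ℕ)
    {h : Z → ℝ≥0∞} (hh : Measurable h) (h_fin : ∀ y, h y ≠ ∞) :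
    ENNReal.ofReal (∫ y, min 1 (n * (h y).toReal) ∂P) = ∫⁻ y, min 1 (n * h y) ∂P := by
  have hnonneg : ∀ y, 0 ≤ min 1 ((n : ℝ) * (h y).toReal) := fun y => by positivity
  have hint : Integrable (fun y => min 1 ((n : ℝ) * (h y).toReal)) P := by
    refine .of_bound (measurable_const.min (hh.ennreal_toReal.const_mul _)).aestronglyMeasurable 1
      (Filter.Eventually.of_forall fun y => ?_)
    rw [Real.norm_of_nonneg (hnonneg y)]
    exact min_le_left _ _
  rw [ofReal_integral_eq_lintegral_ofReal hint (Filter.Eventually.of_forall hnonneg)]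
  congr 1 with y
  rw [ENNReal.ofReal_min, ENNReal.ofReal_one, ENNReal.ofReal_mul (Nat.cast_nonneg n),
    ENNReal.ofReal_natCast, ENNReal.ofReal_toReal (h_fin y)]

end UnionBound

namespace Fin

noncomputable def firstArgmax {n : ℕ} (v : Fin (n + 1) → ℝ) : Fin (n + 1) :=
  (Finset.univ.filter fun j => ∀ k, v k ≤ v j).min'
    (let ⟨j, hj⟩ := Finite.exists_max v; ⟨j, Finset.mem_filter.2 ⟨Finset.mem_univ _, hj⟩⟩)

theorem firstArgmax_eq_iff {n : ℕ} {v : Fin (n + 1) → ℝ} {j : Fin (n + 1)} :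
    firstArgmax v = j ↔ (∀ k, v k ≤ v j) ∧ ∀ k < j, v k < v j := by
  rw [firstArgmax, Finset.min'_eq_iff]
  simp only [Finset.mem_filter, Finset.mem_univ, true_and]
  refine and_congr_right fun hj => ⟨fun h k hk => ?_, fun h k hk => ?_⟩
  · by_contra hle
    exact (h k fun l => (hj l).trans (not_lt.1 hle)).not_gt hk
  · by_contra hlt
    exact (hk j).not_gt (h k (not_le.1 hlt))

theorem firstArgmax_eq_of_forall_lt {n : ℕ} {v : Fin (n + 1) → ℝ} {j : Fin (n + 1)}
    (h : ∀ k ≠ j, v k < v j) : firstArgmax v = j := by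
  refine firstArgmax_eq_iff.2 ⟨fun k => ?_, fun k hk => h k hk.ne⟩
  rcases eq_or_ne k j with rfl | hk
  · exact le_rfl
  · exact (h k hk).le

theorem measurable_firstArgmax {n : ℕ} : Measurable (firstArgmax (n := n)) := by
  refine measurable_to_countable' fun j => ?_
  have hpre : firstArgmax ⁻¹' {j} =
      (⋂ k, {v | v k ≤ v j}) ∩ ⋂ k, ⋂ _ : k < j, {v | v k < v j} := by
    ext v
    simp [firstArgmax_eq_iff]
  rw [hpre]
  exact (MeasurableSet.iInter fun k => measurableSet_le (measurable_pi_apply k)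
    (measurable_pi_apply j)).inter (MeasurableSet.iInter fun k => MeasurableSet.iInter fun _ =>
      measurableSet_lt (measurable_pi_apply k) (measurable_pi_apply j))

end Fin

section PulsePosition

variable {X Y : Type*} {n N : ℕ} {c : Fin (n + 1) × Fin N → ℕ}

open Classical in
noncomputable def pulseCodeword (c : Fin (n + 1) × Fin N → ℕ) (x_zero x₀ : X) (j : Fin (n + 1))
    (m : ℕ) : X :=
  if m ∈ Set.range fun i => c (j, i) then x₀ else x_zero

noncomputable def pulseDecoder (c : Fin (n + 1) × Fin N → ℕ) (g : (Fin N → Y) → ℝ)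
    (y : ℕ → Y) : Fin (n + 1) :=
  Fin.firstArgmax fun k => g fun i => y (c (k, i))

theorem pulseCodeword_apply (hc : c.Injective) (x_zero x₀ : X) (j k : Fin (n + 1)) (i : Fin N) :
    pulseCodeword c x_zero x₀ j (c (k, i)) = if k = j then x₀ else x_zero := by
  simp [pulseCodeword, hc.eq_iff, eq_comm]

theorem tsum_ofReal_pulseCodeword (hc : c.Injective) {b : X → ℝ} {x_zero : X}
    (hzero : b x_zero = 0) (x₀ : X) (j : Fin (n + 1)) :
    ∑' m, ENNReal.ofReal (b (pulseCodeword c x_zero x₀ j m)) = N * ENNReal.ofReal (b x₀) := by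
  have hind : (fun m => ENNReal.ofReal (b (pulseCodeword c x_zero x₀ j m))) =
      (Set.range fun i => c (j, i)).indicator fun _ => ENNReal.ofReal (b x₀) := by
    ext m
    by_cases hm : m ∈ Set.range fun i => c (j, i) <;> simp [pulseCodeword, hm, hzero]
  rw [hind, ← tsum_subtype,
    tsum_range (g := fun i => c (j, i)) (fun _ => ENNReal.ofReal (b x₀))
      (hc.comp (Prod.mk_right_injective j))]
  simp

theorem measurable_pulseDecoder [MeasurableSpace Y] {g : (Fin N → Y) → ℝ} (hg : Measurable g) :
    Measurable (pulseDecoder c g) :=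
  Fin.measurable_firstArgmax.comp <| measurable_pi_lambda _ fun _ =>
    hg.comp <| measurable_pi_lambda _ fun _ => measurable_pi_apply _

theorem measure_pulseDecoder_ne_le [MeasurableSpace X] [MeasurableSpace Y] (κ : Kernel X Y)
    [IsMarkovKernel κ] (hc : c.Injective) {g : (Fin N → Y) → ℝ} (hg : Measurable g)
    {x_zero x₀ : X} {j : Fin (n + 1)}
    {μ : Measure (ℕ → Y)} (hμ : IsPiNat (fun m => κ (pulseCodeword c x_zero x₀ j m)) μ) :
    μ {y | pulseDecoder c g y ≠ j} ≤
      ∫⁻ y, min 1 (n * (Measure.pi fun _ : Fin N => κ x_zero) {z | g y ≤ g z})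
        ∂(Measure.pi fun _ : Fin N => κ x₀) := by
  set E : Set ((Fin N → Y) × (Fin N → Y)) := {p | g p.1 ≤ g p.2}
  have hE : MeasurableSet E := measurableSet_le (hg.comp measurable_fst) (hg.comp measurable_snd)
  have hblocks : Measurable fun (y : ℕ → Y) k i => y (c (k, i)) := by fun_prop
  have hcollision : MeasurableSet {w : Fin (n + 1) → Fin N → Y | ∃ k ≠ j, (w j, w k) ∈ E} := by
    simp only [Set.ofPred_exists]
    exact .iUnion fun k => (MeasurableSet.const _).inter
      (hE.preimage ((measurable_pi_apply j).prodMk (measurable_pi_apply k)))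
  have hlaw : μ.map (fun y k i => y (c (k, i))) =
      Measure.pi fun k => if k = j then Measure.pi (fun _ : Fin N => κ x₀)
        else Measure.pi fun _ : Fin N => κ x_zero := by
    rw [hμ.map_blocks hc]
    congr 1 with k
    simp only [pulseCodeword_apply hc]
    split_ifs <;> rfl
  calc μ {y | pulseDecoder c g y ≠ j}
      ≤ μ ((fun y k i => y (c (k, i))) ⁻¹' {w | ∃ k ≠ j, (w j, w k) ∈ E}) := by
        refine measure_mono fun y hy => ?_
        by_contra hwin
        exact hy (Fin.firstArgmax_eq_of_forall_lt fun k hk => not_le.1 fun hle => hwin ⟨k, hk, hle⟩)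
    _ = _ := by rw [← Measure.map_apply hblocks hcollision, hlaw]
    _ ≤ _ := measure_pi_exists_ne_mem_le_lintegral _ _ hE j

noncomputable def pulseCode [MeasurableSpace X] [MeasurableSpace Y] (κ : Kernel X Y)
    [IsMarkovKernel κ] (b : X → ℝ) {x_zero : X} (hzero : b x_zero = 0) (x₀ : X)
    (hc : c.Injective) {g : (Fin N → Y) → ℝ} (hg : Measurable g) :
    Code κ b (N * b x₀) (n + 1)
      (∫ y, min 1 (n * ((Measure.pi fun _ : Fin N => κ x_zero) {z | g y ≤ g z}).toReal)
        ∂(Measure.pi fun _ : Fin N => κ x₀)) where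
  enc := pulseCodeword c x_zero x₀
  dec := pulseDecoder c g
  meas_dec := measurable_pulseDecoder hg
  cost j := by
    rw [tsum_ofReal_pulseCodeword hc hzero, ENNReal.ofReal_mul (Nat.cast_nonneg N),
      ENNReal.ofReal_natCast]
  err j μ hμ := by
    have hmeas : Measurable fun y => (Measure.pi fun _ : Fin N => κ x_zero) {z | g y ≤ g z} :=
      measurable_measure_prodMk_left (measurableSet_le (hg.comp measurable_fst)
        (hg.comp measurable_snd))
    rw [ofReal_integral_min_one_mul _ n hmeas fun _ => measure_ne_top _ _]
    exact measure_pulseDecoder_ne_le κ hc hg hμ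

end PulsePosition

theorem achievability_rcu_general
    {X Y : Type*} [MeasurableSpace X] [MeasurableSpace Y]
    (κ : Kernel X Y) [IsMarkovKernel κ] (b : X → ℝ)
    (x_zero : X) (hzero : b x_zero = 0)
    (x₀ : X)
    (N : ℕ) (M : ℕ) (hM : 1 ≤ M) :
    Nonempty (Code κ b ((N : ℝ) * b x₀) M
      (∫ y, min 1 (((M : ℝ) - 1) *
          ((Measure.pi fun _ : Fin N => κ x_zero)
            {yh | iDen (Measure.pi fun _ : Fin N => κ x₀)
                    (Measure.pi fun _ : Fin N => κ x_zero) y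
                  ≤ iDen (Measure.pi fun _ : Fin N => κ x₀)
                    (Measure.pi fun _ : Fin N => κ x_zero) yh}).toReal)
        ∂(Measure.pi fun _ : Fin N => κ x₀))) := by
  obtain ⟨n, rfl⟩ := Nat.exists_eq_add_of_le' hM
  have hc : Function.Injective fun q : Fin (n + 1) × Fin N => (finProdFinEquiv q : ℕ) :=
    Fin.val_injective.comp finProdFinEquiv.injective
  have hg : Measurable (iDen (Measure.pi fun _ : Fin N => κ x₀)
      (Measure.pi fun _ : Fin N => κ x_zero)) :=
    Real.measurable_log.comp (Measure.measurable_rnDeriv _ _).ennreal_toReal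
  rw [Nat.cast_add_one, add_sub_cancel_right]
  exact ⟨pulseCode κ b hzero x₀ hc hg⟩

theorem achievability_rcu
    {X Y : Type*} [MeasurableSpace X] [MeasurableSpace Y]
    (κ : Kernel X Y) [IsMarkovKernel κ] (b : X → ℝ) (hb : ∀ x, 0 ≤ b x)
    (x_zero : X) (hzero : b x_zero = 0)
    (x₀ : X) (hx₀ : 0 < b x₀) (habs : κ x₀ ≪ κ x_zero)
    (N : ℕ) (M : ℕ) (hM : 1 ≤ M) :
    Nonempty (Code κ b ((N : ℝ) * b x₀) M
      (∫ y, min 1 (((M : ℝ) - 1) *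
          ((Measure.pi fun _ : Fin N => κ x_zero)
            {yh | iDen (Measure.pi fun _ : Fin N => κ x₀)
                    (Measure.pi fun _ : Fin N => κ x_zero) y
                  ≤ iDen (Measure.pi fun _ : Fin N => κ x₀)
                    (Measure.pi fun _ : Fin N => κ x_zero) yh}).toReal)
        ∂(Measure.pi fun _ : Fin N => κ x₀))) :=
  achievability_rcu_general κ b x_zero hzero x₀ N M hM
end

section
/- Let a stationary memoryless channel with input alphabet 𝒳, output alphabet 𝒴, Markov kernel P_{Y|X}, cost function b and zero-cost symbol 0 be given. Every (E, M, ε)-code for this channel contains a codeword x = (x₁,x₂,…) with Σ_i b(x_i) ≤ E such that β_{1−ε}( ⊗_i P_{Y|X=x_i}, ⊗_i P_{Y|X=0} ) ≤ 1/M; equivalently, M ≤ sup over all x ∈ 𝒳^ℕ with Σ_i b(x_i) ≤ E of 1 / β_{1−ε}( ⊗_i P_{Y|X=x_i}, ⊗_i P_{Y|X=0} ). -/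
/-! The decoding regions `g⁻¹' {j}` partition the output space, so under the output distribution
`Q` of the all-zero input one of them has mass at most `1 / M`. Under the distribution induced by
its own codeword that region has mass at least `1 - ε`, so its indicator is an admissible test and
`β_{1-ε} ≤ 1 / M`. Since a product measure is determined by its values on cylinders, `Q` does not
depend on the choice of product measure. -/

open MeasureTheory ProbabilityTheory

open Set

theorem IsPiNat.unique {Y : Type*} [MeasurableSpace Y] {ν : ℕ → Measure Y}
    {μ₁ μ₂ : Measure (ℕ → Y)} (h₁ : IsPiNat ν μ₁) (h₂ : IsPiNat ν μ₂) : μ₁ = μ₂ := by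
  have := h₁.1
  refine ext_of_generate_finite _ generateFrom_squareCylinders.symm
    (isPiSystem_squareCylinders (fun _ => MeasurableSpace.isPiSystem_measurableSet)
      fun _ => MeasurableSet.univ) ?_ (by simp [h₂.1.measure_univ])
  rintro _ ⟨s, A, hA, rfl⟩
  have hA' : ∀ i, MeasurableSet (A i) := fun i => hA i (mem_univ i)
  exact (h₁.2 s A hA').trans (h₂.2 s A hA').symm

theorem exists_measureReal_preimage_singleton_le {Ω ι : Type*} [MeasurableSpace Ω] [Fintype ι]
    [Nonempty ι] (μ : Measure Ω) [IsProbabilityMeasure μ] {f : Ω → ι}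
    (hf : ∀ i, MeasurableSet (f ⁻¹' {i})) :
    ∃ i, μ.real (f ⁻¹' {i}) ≤ 1 / Fintype.card ι := by
  have hsum : ∑ i, μ.real (f ⁻¹' {i}) ≤ ∑ _i : ι, 1 / (Fintype.card ι : ℝ) := by
    rw [sum_measureReal_preimage_singleton _ fun i _ => hf i]
    simp
  obtain ⟨i, -, hi⟩ := Finset.exists_le_of_sum_le Finset.univ_nonempty hsum
  exact ⟨i, hi⟩

section betaFn

variable {Ω : Type*} [MeasurableSpace Ω] {α : ℝ} {P : Measure Ω} (Q : Measure Ω)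

theorem betaFn_le_integral {f : Ω → ℝ} (hf : Measurable f) (hf01 : ∀ ω, f ω ∈ Icc (0 : ℝ) 1)
    (hα : α ≤ ∫ ω, f ω ∂P) : betaFn α P Q ≤ ∫ ω, f ω ∂Q := by
  refine ciInf_le ⟨0, ?_⟩ (⟨f, hf, hf01, hα⟩ : {f : Ω → ℝ // _})
  rintro _ ⟨g, rfl⟩
  exact integral_nonneg fun ω => (g.2.2.1 ω).1

theorem betaFn_eq_zero_of_one_lt [IsProbabilityMeasure P] (hα : 1 < α) : betaFn α P Q = 0 := by
  have : IsEmpty {f : Ω → ℝ // Measurable f ∧ (∀ ω, f ω ∈ Icc (0 : ℝ) 1) ∧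
      α ≤ ∫ ω, f ω ∂P} := by
    refine ⟨fun ⟨f, _, hf01, hf⟩ => hα.not_ge (hf.trans ?_)⟩
    calc ∫ ω, f ω ∂P ≤ ∫ _, (1 : ℝ) ∂P :=
          integral_mono_of_nonneg (ae_of_all _ fun ω => (hf01 ω).1) (integrable_const 1)
            (ae_of_all _ fun ω => (hf01 ω).2)
      _ = 1 := by simp
  exact Real.iInf_of_isEmpty _

theorem betaFn_le_measureReal_of_measure_compl_le [IsProbabilityMeasure P] {D : Set Ω}
    (hD : MeasurableSet D) {ε : ℝ} (hε : P Dᶜ ≤ ENNReal.ofReal ε) :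
    betaFn (1 - ε) P Q ≤ Q.real D := by
  -- for `ε < 0` there is no admissible test and `betaFn` is the empty infimum `0`
  rcases lt_or_ge ε 0 with hneg | hnonneg
  · rw [betaFn_eq_zero_of_one_lt Q (by linarith)]
    exact measureReal_nonneg
  have hPD : 1 - ε ≤ P.real D := by
    have := ENNReal.toReal_le_of_le_ofReal hnonneg hε
    rw [← measureReal_def, measureReal_compl hD, probReal_univ] at this
    linarith
  have hf01 : ∀ ω, D.indicator 1 ω ∈ Icc (0 : ℝ) 1 := fun ω => by
    by_cases hω : ω ∈ D <;> simp [hω]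
  simpa [integral_indicator_one hD] using
    betaFn_le_integral Q (measurable_one.indicator hD) hf01 (by rwa [integral_indicator_one hD])

end betaFn

theorem metaconverse_general
    {X Y : Type*} [MeasurableSpace X] [MeasurableSpace Y]
    (κ : Kernel X Y) (b : X → ℝ)
    (x_zero : X)
    (E ε : ℝ) (M : ℕ) (hM : 1 ≤ M)
    (C : Code κ b E M ε) :
    ∃ j : Fin M, ∀ (μP μQ : Measure (ℕ → Y)),
      IsPiNat (fun i => κ (C.enc j i)) μP → IsPiNat (fun _ => κ x_zero) μQ →
      betaFn (1 - ε) μP μQ ≤ 1 / (M : ℝ) := by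
  have : Nonempty (Fin M) := ⟨⟨0, hM⟩⟩
  rcases em (∃ μQ, IsPiNat (fun _ => κ x_zero) μQ) with ⟨μQ, hμQ⟩ | hnone
  swap
  · exact ⟨⟨0, hM⟩, fun _ μQ _ hμQ => (hnone ⟨μQ, hμQ⟩).elim⟩
  have := hμQ.1
  have hdec (j : Fin M) : MeasurableSet (C.dec ⁻¹' {j}) := C.meas_dec (measurableSet_singleton j)
  obtain ⟨j, hj⟩ := exists_measureReal_preimage_singleton_le μQ hdec
  refine ⟨j, fun μP μQ' hμP hμQ' => ?_⟩
  rw [hμQ'.unique hμQ]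
  have := hμP.1
  have herr : μP (C.dec ⁻¹' {j})ᶜ ≤ ENNReal.ofReal ε := C.err j μP hμP
  simpa using (betaFn_le_measureReal_of_measure_compl_le μQ (hdec j) herr).trans hj

theorem metaconverse
    {X Y : Type*} [MeasurableSpace X] [MeasurableSpace Y]
    (κ : Kernel X Y) [IsMarkovKernel κ] (b : X → ℝ) (hb : ∀ x, 0 ≤ b x)
    (x_zero : X) (hzero : b x_zero = 0)
    (E ε : ℝ) (M : ℕ) (hM : 1 ≤ M)
    (C : Code κ b E M ε) :
    ∃ j : Fin M, ∀ (μP μQ : Measure (ℕ → Y)),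
      IsPiNat (fun i => κ (C.enc j i)) μP → IsPiNat (fun _ => κ x_zero) μQ →
      betaFn (1 - ε) μP μQ ≤ 1 / (M : ℝ) :=
  metaconverse_general κ b x_zero E ε M hM C
end

section
/- For every integer k ≥ 1 and every t ∈ (0,1]: (1/(k−1)!) · ∫₀^{t·k} u^{k−1} e^{−u} du ≥ (1/k!) · ∫₀^{t·(k+1)} u^{k} e^{−u} du. Equivalently, if S₁, S₂, … are i.i.d. exponential of mean 1, then P[ Σ_{i=1}^{k} S_i ≤ t·k ] ≥ P[ Σ_{i=1}^{k+1} S_i ≤ t·(k+1) ]. -/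
/-!
Write `F n t` for the probability that the mean of `n + 1` i.i.d. standard exponentials is at
most `t`; its density is `s ↦ (n+1)^(n+1) sⁿ e^{-(n+1)s} / n!`. The difference of two consecutive
densities is `sⁿ e^{-(n+1)s} (c - c' s e^{-s})`, and `s e^{-s}` increases on `[0, 1]`, so the
difference `F n t - F (n+1) t` first increases, then decreases on `[0, 1]`; being `0` at `t = 0`,
it is nonnegative there as soon as it is at `t = 1`. At `t = 1` an
integration by parts reduces the claim to `(n+1) ∫_{n+1}^{n+2} uⁿ e^{-u} du ≤ (n+2)^{n+1} e^{-(n+2)}`,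
which follows by bounding the log-concave `uⁿ e^{-u}` by its tangent exponential at `n + 2` and
using the Padé bound `eˣ ≤ (2 + x) / (2 - x)`.
-/

open Real Set intervalIntegral
open MeasureTheory (volume)

theorem integral_nonneg_of_mul_antitoneOn {f g : ℝ → ℝ} {a b t : ℝ}
    (hf : ∀ x ∈ Icc a b, 0 ≤ f x) (hg : AntitoneOn g (Icc a b))
    (hfg : IntervalIntegrable (fun x => f x * g x) volume a b)
    (hab : 0 ≤ ∫ x in a..b, f x * g x) (ht : t ∈ Icc a b) :
    0 ≤ ∫ x in a..t, f x * g x := by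
  rcases le_or_gt 0 (g t) with hgt | hgt
  · refine integral_nonneg ht.1 fun x hx => mul_nonneg (hf x ⟨hx.1, hx.2.trans ht.2⟩) ?_
    exact hgt.trans (hg ⟨hx.1, hx.2.trans ht.2⟩ ht hx.2)
  · have htail : 0 ≤ ∫ x in t..b, -(f x * g x) := by
      refine integral_nonneg ht.2 fun x hx => ?_
      have hx' : x ∈ Icc a b := ⟨ht.1.trans hx.1, hx.2⟩
      exact neg_nonneg.2 (mul_nonpos_of_nonneg_of_nonpos (hf x hx')
        ((hg ht hx' hx.1).trans hgt.le))
    have hsplit := integral_add_adjacent_intervals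
      (hfg.mono_set (uIcc_subset_uIcc_left (mem_uIcc_of_le ht.1 ht.2)))
      (hfg.mono_set (uIcc_subset_uIcc_right (mem_uIcc_of_le ht.1 ht.2)))
    rw [integral_neg] at htail
    linarith

theorem monotoneOn_mul_exp_neg : MonotoneOn (fun x : ℝ => x * exp (-x)) (Iic 1) := by
  have hderiv (x : ℝ) : HasDerivAt (fun x : ℝ => x * exp (-x)) ((1 - x) * exp (-x)) x :=
    ((hasDerivAt_id' x).mul (hasDerivAt_neg x).exp).congr_deriv (by ring)
  refine monotoneOn_of_hasDerivWithinAt_nonneg (convex_Iic 1) (by fun_prop)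
    (fun x _ => (hderiv x).hasDerivWithinAt) fun x hx => ?_
  rw [interior_Iic] at hx
  exact mul_nonneg (sub_nonneg.2 (le_of_lt hx)) (exp_pos _).le

theorem integral_pow_succ_mul_exp_neg (n : ℕ) (x : ℝ) :
    ∫ u in (0 : ℝ)..x, u ^ (n + 1) * exp (-u)
      = (n + 1) * (∫ u in (0 : ℝ)..x, u ^ n * exp (-u)) - x ^ (n + 1) * exp (-x) := by
  have hpow (u : ℝ) : HasDerivAt (fun u : ℝ => u ^ (n + 1)) ((n + 1) * u ^ n) u := by
    simpa using hasDerivAt_pow (n + 1) u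
  have hexp (u : ℝ) : HasDerivAt (fun u : ℝ => -exp (-u)) (exp (-u)) u :=
    ((hasDerivAt_neg u).exp.neg).congr_deriv (by simp)
  rw [integral_mul_deriv_eq_deriv_mul (fun u _ => hpow u) (fun u _ => hexp u)
    (Continuous.intervalIntegrable (by fun_prop) _ _)
    (Continuous.intervalIntegrable (by fun_prop) _ _)]
  simp [mul_assoc, integral_const_mul]
  ring

theorem integral_pow_mul_exp_neg_rescale (n : ℕ) (c t : ℝ) :
    ∫ u in (0 : ℝ)..c * t, u ^ n * exp (-u)
      = c ^ (n + 1) * ∫ s in (0 : ℝ)..t, s ^ n * exp (-(c * s)) := by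
  have hsub := smul_integral_comp_mul_left (fun u => u ^ n * exp (-u)) c (a := 0) (b := t)
  rw [mul_zero, smul_eq_mul] at hsub
  simp only [← hsub, mul_pow, mul_assoc, integral_const_mul]
  ring

/-- The tangent line at `a` of the concave function `log (uⁿ e^{-u})`. -/
theorem pow_mul_exp_neg_le {a : ℝ} (ha : 0 < a) (n : ℕ) {u : ℝ} (hu : 0 ≤ u) :
    u ^ n * exp (-u) ≤ a ^ n * exp (-a) * exp ((1 - n / a) * (a - u)) := by
  have hratio : (u / a) ^ n ≤ exp (u / a - 1) ^ n := by
    gcongr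
    linarith [add_one_le_exp (u / a - 1)]
  rw [div_pow, div_le_iff₀ (by positivity), ← exp_nat_mul] at hratio
  calc u ^ n * exp (-u) ≤ exp (n * (u / a - 1)) * a ^ n * exp (-u) := by gcongr
    _ = a ^ n * exp (-a) * exp ((1 - n / a) * (a - u)) := by
      rw [mul_comm _ (a ^ n), mul_assoc, mul_assoc, ← exp_add, ← exp_add]
      congr 2
      field_simp
      ring

theorem integral_exp_mul_le_two_div_two_sub {c : ℝ} (hc₀ : 0 < c) (hc₂ : c < 2) :
    ∫ x in (0 : ℝ)..1, exp (c * x) ≤ 2 / (2 - c) := by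
  rw [integral_comp_mul_left _ hc₀.ne', integral_exp, smul_eq_mul, mul_zero, mul_one, exp_zero,
    inv_mul_le_iff₀ hc₀]
  have hpade := exp_le_two_add_div_two_sub hc₀.le hc₂
  have hsplit : (2 + c) / (2 - c) = 1 + c * (2 / (2 - c)) := by
    field_simp [(sub_pos.2 hc₂).ne']
    ring
  linarith

theorem succ_mul_integral_pow_mul_exp_neg_le (n : ℕ) :
    (n + 1) * ∫ u in (n + 1 : ℝ)..(n + 2), u ^ n * exp (-u)
      ≤ ((n : ℝ) + 2) ^ (n + 1) * exp (-(n + 2)) := by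
  set a : ℝ := n + 2 with ha_def
  have ha : 0 < a := by positivity
  have hslope : 1 - n / a = 2 / a := by field_simp; ring
  calc (n + 1) * ∫ u in (n + 1 : ℝ)..a, u ^ n * exp (-u)
      ≤ (n + 1) * ∫ u in a - 1..a, a ^ n * exp (-a) * exp (2 / a * (a - u)) := by
        rw [show a - 1 = n + 1 by ring]
        gcongr
        refine integral_mono_on (by linarith) ?_ ?_ fun u hu => ?_
        · exact Continuous.intervalIntegrable (by fun_prop) _ _
        · exact Continuous.intervalIntegrable (by fun_prop) _ _
        · rw [← hslope]
          exact pow_mul_exp_neg_le ha n (by linarith [hu.1])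
    _ = (n + 1) * (a ^ n * exp (-a) * ∫ v in (0 : ℝ)..1, exp (2 / a * v)) := by
        rw [integral_const_mul, integral_comp_sub_left (fun v => exp (2 / a * v))]
        simp
    _ ≤ (n + 1) * (a ^ n * exp (-a) * (2 / (2 - 2 / a))) := by
        gcongr
        exact integral_exp_mul_le_two_div_two_sub (by positivity) (by rw [div_lt_iff₀ ha]; linarith)
    _ = a ^ (n + 1) * exp (-a) := by
        rw [show 2 - 2 / a = 2 * (n + 1) / a by field_simp; ring]
        field_simp
        ring

/-- `expMeanCDF n t = P[S₁ + ⋯ + S_{n+1} ≤ (n + 1) t]`; indexing by `n = k - 1` avoids truncated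
subtraction in `ℕ`. -/
noncomputable def expMeanCDF (n : ℕ) (t : ℝ) : ℝ :=
  1 / n.factorial * ∫ u in (0 : ℝ)..t * (n + 1), u ^ n * exp (-u)

theorem expMeanCDF_succ_one_le (n : ℕ) : expMeanCDF (n + 1) 1 ≤ expMeanCDF n 1 := by
  have htail := succ_mul_integral_pow_mul_exp_neg_le n
  have hsplit := integral_add_adjacent_intervals (μ := volume) (a := 0) (b := (n : ℝ) + 1)
    (c := n + 2) (f := fun u => u ^ n * exp (-u))
    (Continuous.intervalIntegrable (by fun_prop) _ _)
    (Continuous.intervalIntegrable (by fun_prop) _ _)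
  simp only [expMeanCDF, one_mul, Nat.cast_succ, Nat.factorial_succ, Nat.cast_mul]
  rw [show (n : ℝ) + 1 + 1 = n + 2 by ring, integral_pow_succ_mul_exp_neg, ← hsplit]
  generalize (∫ u in (0 : ℝ)..n + 1, u ^ n * exp (-u)) = X
  generalize (∫ u in (n + 1 : ℝ)..n + 2, u ^ n * exp (-u)) = I at htail
  have hF : (0 : ℝ) < n.factorial := by positivity
  rw [← sub_nonneg]
  have hdiff : 1 / n.factorial * X - 1 / ((n + 1) * n.factorial) * ((n + 1) * (X + I)
      - ((n : ℝ) + 2) ^ (n + 1) * exp (-(n + 2)))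
      = (((n : ℝ) + 2) ^ (n + 1) * exp (-(n + 2)) - (n + 1) * I) / ((n + 1) * n.factorial) := by
    field_simp
    ring
  rw [hdiff]
  exact div_nonneg (sub_nonneg.2 htail) (by positivity)

theorem expMeanCDF_sub_succ (n : ℕ) (t : ℝ) :
    expMeanCDF n t - expMeanCDF (n + 1) t
      = ∫ s in (0 : ℝ)..t, s ^ n * exp (-((n + 1) * s)) * (((n : ℝ) + 1) ^ (n + 1) / n.factorial
          - ((n : ℝ) + 2) ^ (n + 2) / (n + 1).factorial * (s * exp (-s))) := by
  have hexpand (s : ℝ) : s ^ n * exp (-((n + 1) * s)) * (((n : ℝ) + 1) ^ (n + 1) / n.factorial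
      - ((n : ℝ) + 2) ^ (n + 2) / (n + 1).factorial * (s * exp (-s)))
      = ((n : ℝ) + 1) ^ (n + 1) / n.factorial * (s ^ n * exp (-((n + 1) * s)))
        - ((n : ℝ) + 2) ^ (n + 2) / (n + 1).factorial * (s ^ (n + 1) * exp (-((n + 2) * s))) := by
    rw [show -(((n : ℝ) + 2) * s) = -s + -((n + 1) * s) by ring, exp_add]
    ring
  simp only [hexpand, expMeanCDF]
  rw [integral_sub (Continuous.intervalIntegrable (by fun_prop) _ _)
    (Continuous.intervalIntegrable (by fun_prop) _ _), integral_const_mul, integral_const_mul,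
    mul_comm t, mul_comm t, integral_pow_mul_exp_neg_rescale, integral_pow_mul_exp_neg_rescale]
  push_cast
  rw [show (n : ℝ) + 1 + 1 = n + 2 by ring]
  ring

theorem expMeanCDF_succ_le (n : ℕ) {t : ℝ} (ht : t ∈ Icc 0 1) :
    expMeanCDF (n + 1) t ≤ expMeanCDF n t := by
  rw [← sub_nonneg, expMeanCDF_sub_succ]
  refine integral_nonneg_of_mul_antitoneOn (fun s hs => by have := hs.1; positivity) ?_
    (Continuous.intervalIntegrable (by fun_prop) _ _) ?_ ht
  · intro x hx y hy hxy
    exact sub_le_sub_left (mul_le_mul_of_nonneg_left (monotoneOn_mul_exp_neg hx.2 hy.2 hxy)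
      (by positivity)) _
  · rw [← expMeanCDF_sub_succ]
    exact sub_nonneg.2 (expMeanCDF_succ_one_le n)

theorem gamma_cdf_comparison
    (k : ℕ) (hk : 1 ≤ k) (t : ℝ) (ht : t ∈ Set.Ioc (0 : ℝ) 1) :
    (1 / ((k - 1).factorial : ℝ)) *
        ∫ u in (0 : ℝ)..(t * k), u ^ (k - 1) * Real.exp (-u) ≥
      (1 / (k.factorial : ℝ)) *
        ∫ u in (0 : ℝ)..(t * (k + 1)), u ^ k * Real.exp (-u) := by
  obtain ⟨n, rfl⟩ := Nat.exists_eq_add_of_le' hk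
  simpa [expMeanCDF] using expMeanCDF_succ_le n (Ioc_subset_Icc_self ht)
end

section
/- Let a > 0, b > 0, c ≥ 0 and d ∈ ℝ, and define f : [0,b] → ℝ by f(t) = ln(1+t) + ln(1+b−t) + a·√( c + t² + (b−t)² ) + d. Then for every t ∈ (0, b/2): f(t) > min{ f(0), f(b/2) }. -/
/-!
Since `(1 + t)(1 + b - t) = 1 + b + u` and `t² + (b - t)² = b² - 2u` for `u = t(b - t)`, we have
`f t = g u` with `g u = log (1 + b + u) + a √(c + b² - 2u) + d`, a strictly concave function of `u`.
As `t` runs over `(0, b/2)`, `u` runs over `(0, b²/4)`, whose endpoints correspond to `t = 0` and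
`t = b/2`; in the interior of a segment a strictly concave function exceeds its smaller endpoint
value.
-/

open Real Set

lemma strictConcaveOn_log_const_add (p : ℝ) :
    StrictConcaveOn ℝ (Ioi (-p)) fun u => log (p + u) := by
  have h := strictConcaveOn_log_Ioi.translate_right p
  rwa [show (p + ·) ⁻¹' Ioi 0 = Ioi (-p) by ext; simp [neg_lt_iff_pos_add']] at h

lemma concaveOn_sqrt_sub_mul (q r : ℝ) :
    ConcaveOn ℝ {u | r * u ≤ q} fun u => √(q - r * u) := by
  have h := strictConcaveOn_sqrt.concaveOn.comp_affineMap
    (AffineMap.const ℝ ℝ q - r • AffineMap.id ℝ ℝ)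
  rwa [show ⇑(AffineMap.const ℝ ℝ q - r • AffineMap.id ℝ ℝ) ⁻¹' Ici 0 = {u | r * u ≤ q} by
    ext; simp] at h

lemma strictConcaveOn_log_add_mul_sqrt (p q r d : ℝ) {a : ℝ} (ha : 0 ≤ a) :
    StrictConcaveOn ℝ (Ioi (-p) ∩ {u | r * u ≤ q})
      fun u => log (p + u) + a * √(q - r * u) + d := by
  have hconv := (convex_Ioi (-p)).inter (concaveOn_sqrt_sub_mul q r).1
  exact (((strictConcaveOn_log_const_add p).subset inter_subset_left hconv).add_concaveOn
    (((concaveOn_sqrt_sub_mul q r).subset inter_subset_right hconv).smul ha)).add_const d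

theorem boundary_minimum_of_symmetric_function
    (a b c d : ℝ) (ha : 0 < a) (hb : 0 < b) (hc : 0 ≤ c)
    (f : ℝ → ℝ)
    (hf : ∀ t, f t = Real.log (1 + t) + Real.log (1 + b - t) +
        a * Real.sqrt (c + t ^ 2 + (b - t) ^ 2) + d) :
    ∀ t ∈ Set.Ioo (0 : ℝ) (b / 2), f t > min (f 0) (f (b / 2)) := by
  rintro t ⟨ht0, htb⟩
  set g : ℝ → ℝ := fun u => log (1 + b + u) + a * √(c + b ^ 2 - 2 * u) + d
  have hfg : ∀ s ∈ Icc 0 b, f s = g (s * (b - s)) := by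
    rintro s ⟨hs0, hsb⟩
    rw [hf, ← log_mul (by linarith) (by linarith)]
    congr 4 <;> ring
  have hf0 : f 0 = g 0 := by simpa using hfg 0 ⟨le_rfl, hb.le⟩
  have hf_half : f (b / 2) = g (b ^ 2 / 4) := by
    rw [hfg (b / 2) ⟨by positivity, by linarith⟩]
    congr 1
    ring
  have hu : t * (b - t) ∈ openSegment ℝ 0 (b ^ 2 / 4) := by
    rw [openSegment_eq_Ioo (by positivity)]
    constructor <;> nlinarith
  have hg_min := (strictConcaveOn_log_add_mul_sqrt (1 + b) (c + b ^ 2) 2 d ha.le).lt_on_openSegment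
    ⟨show -(1 + b) < 0 by linarith, show 2 * 0 ≤ c + b ^ 2 by nlinarith⟩
    ⟨show -(1 + b) < b ^ 2 / 4 by nlinarith, show 2 * (b ^ 2 / 4) ≤ c + b ^ 2 by nlinarith⟩
    (by positivity) hu
  rw [hf0, hf_half, hfg t ⟨ht0.le, by linarith⟩]
  exact hg_min
end

section
/- For every a > 0 and every c > 0: the infimum over all x = (x₁, x₂, …) ∈ [0,∞)^ℕ with Σ_{i=1}^{∞} x_i = c of the quantity Σ_{i=1}^{∞} ln(1+x_i) + a·( Σ_{i=1}^{∞} x_i² )^{1/2} equals the infimum over integers N ≥ 1 of N·ln(1 + c/N) + a·c/√N. Moreover, any minimizer x has all of its nonzero entries equal. -/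
/-!
Replacing two distinct nonzero entries `u ≠ v` of `x` either by two copies of their mean or by
`u + v` and `0` strictly lowers the objective. This is the claim about minimizers, and on a
finite-dimensional simplex, where a minimizer exists by compactness, it forces the minimizer to
consist of `N` entries `c / N`, so its value is `N log (1 + c / N) + a c / √N`. An infinite `x` is
compared with `(x₀, …, x_{n-1}, ∑_{i ≥ n} x i)`, whose objective exceeds that of `x` by at most
`(1 + a)` times the tail.
-/

open Real Finset

lemma Real.sqrt_sub_sqrt_le {x y : ℝ} (hx : 0 < x) (hy : 0 ≤ y) :
    √y - √x ≤ (y - x) / (2 * √x) := by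
  rw [le_div_iff₀ (by positivity)]
  nlinarith [sq_nonneg (√y - √x), sq_sqrt hx.le, sq_sqrt hy]

lemma Real.sqrt_add_sq_le {p t : ℝ} (hp : 0 ≤ p) (ht : 0 ≤ t) : √(p + t ^ 2) ≤ √p + t := by
  rw [sqrt_le_left (by positivity)]
  nlinarith [sq_sqrt hp, sqrt_nonneg p]

lemma Real.log_sub_log_le {x y : ℝ} (hx : 0 < x) (hy : 0 < y) :
    log y - log x ≤ (y - x) / x := by
  rw [← log_div hy.ne' hx.ne', sub_div, div_self hx.ne']
  exact log_le_sub_one_of_pos (div_pos hy hx)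

lemma Real.log_sub_log_lt {x y : ℝ} (hx : 0 < x) (hy : 0 < y) (hxy : y ≠ x) :
    log y - log x < (y - x) / x := by
  rw [← log_div hy.ne' hx.ne', sub_div, div_self hx.ne']
  exact log_lt_sub_one_of_pos (div_pos hy hx) (by rwa [ne_eq, div_eq_one_iff_eq hx.ne'])

/-- The witness is the average `((u + v) / 2, (u + v) / 2)` or the merge `(u + v, 0)`. With
`E = (1 + u)(1 + v)`, `P = Q + u² + v²`, `d = (u - v)² / 4` and `w = u v`, averaging raises the
logarithms by less than `d / E` and lowers the root by at least `d / √P`, while merging lowers the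
logarithms by at least `w / E` and raises the root by at most `w / √P`; compare `1 / E` with
`a / √P`. -/
lemma exists_rebalance_lt {a u v Q : ℝ} (ha : 0 ≤ a) (hu : 0 < u) (hv : 0 < v) (huv : u ≠ v)
    (hQ : 0 ≤ Q) :
    ∃ A B : ℝ, 0 ≤ A ∧ 0 ≤ B ∧ A + B = u + v ∧
      log (1 + A) + log (1 + B) + a * √(Q + A ^ 2 + B ^ 2) <
        log (1 + u) + log (1 + v) + a * √(Q + u ^ 2 + v ^ 2) := by
  set E := (1 + u) * (1 + v)
  set P := Q + u ^ 2 + v ^ 2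
  have hE : 0 < E := by positivity
  have hP : 0 < √P := sqrt_pos.2 (by positivity)
  have hlogE : log (1 + u) + log (1 + v) = log E := (log_mul (by positivity) (by positivity)).symm
  rw [hlogE]
  rcases le_or_gt (1 / E) (a / √P) with h | h
  · set d := (u - v) ^ 2 / 4
    have hd : 0 < d := by have := sub_ne_zero.2 huv; positivity
    refine ⟨(u + v) / 2, (u + v) / 2, by positivity, by positivity, by ring, ?_⟩
    have hlog : log (1 + (u + v) / 2) + log (1 + (u + v) / 2) = log (E + d) := by
      rw [← log_mul (by positivity) (by positivity)]; congr 1; ring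
    have hQ' : Q + ((u + v) / 2) ^ 2 + ((u + v) / 2) ^ 2 = P - 2 * d := by ring
    have hlog_lt := log_sub_log_lt hE (by positivity : 0 < E + d) (by linarith)
    have hsqrt_le := sqrt_sub_sqrt_le (sqrt_pos.1 hP) (by nlinarith : 0 ≤ P - 2 * d)
    have hcmp : d / E ≤ a * (d / √P) := by
      calc d / E = 1 / E * d := by ring
        _ ≤ a / √P * d := mul_le_mul_of_nonneg_right h hd.le
        _ = a * (d / √P) := by ring
    have hroot : a * (√(P - 2 * d) - √P) ≤ a * (-(d / √P)) := by
      refine mul_le_mul_of_nonneg_left (hsqrt_le.trans_eq ?_) ha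
      field_simp; ring
    rw [hlog, hQ']
    rw [add_sub_cancel_left] at hlog_lt
    linarith
  · set w := u * v
    have hw : 0 < w := by positivity
    refine ⟨u + v, 0, by positivity, le_rfl, by ring, ?_⟩
    have hQ' : Q + (u + v) ^ 2 + 0 ^ 2 = P + 2 * w := by ring
    have hlog_le := log_sub_log_le hE (by positivity : 0 < 1 + (u + v))
    have hsqrt_le := sqrt_sub_sqrt_le (sqrt_pos.1 hP) (by positivity : 0 ≤ P + 2 * w)
    have hcmp : a * (w / √P) < w / E := by
      calc a * (w / √P) = a / √P * w := by ring
        _ < 1 / E * w := mul_lt_mul_of_pos_right h hw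
        _ = w / E := by ring
    have hroot : a * (√(P + 2 * w) - √P) ≤ a * (w / √P) := by
      refine mul_le_mul_of_nonneg_left (hsqrt_le.trans_eq ?_) ha
      field_simp; ring
    have hE' : (1 + (u + v) - E) / E = -(w / E) := by
      field_simp; ring
    rw [hQ', add_zero, log_one, add_zero]
    rw [hE'] at hlog_le
    linarith

noncomputable def logPlusL2 {ι : Type*} (a : ℝ) (x : ι → ℝ) : ℝ :=
  ∑' i, log (1 + x i) + a * √(∑' i, x i ^ 2)

noncomputable def equalSplitValue (a c : ℝ) (N : ℕ) : ℝ :=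
  N * log (1 + c / N) + a * c / √N

section

variable {ι : Type*} {a c : ℝ} {x : ι → ℝ}

lemma logPlusL2_nonneg (ha : 0 ≤ a) (hx : ∀ i, 0 ≤ x i) : 0 ≤ logPlusL2 a x :=
  add_nonneg (tsum_nonneg fun i => log_nonneg (by linarith [hx i])) (by positivity)

lemma summable_sq_of_nonneg (hx : ∀ i, 0 ≤ x i) (hs : Summable x) :
    Summable fun i => x i ^ 2 :=
  (hs.mul_left (∑' j, x j)).of_nonneg_of_le (fun i => sq_nonneg _)
    (fun i => by nlinarith [hx i, hs.le_tsum i fun j _ => hx j])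

lemma tsum_comp_update_update [DecidableEq ι] (g : ℝ → ℝ) (hs : Summable fun k => g (x k))
    {i j : ι} (hij : i ≠ j) (A B : ℝ) :
    ∑' k, g (Function.update (Function.update x i A) j B k) =
      ∑' k, g (x k) - g (x i) - g (x j) + g A + g B := by
  have h := (hs.hasSum.update i (g A)).update j (g B)
  rw [Function.update_of_ne hij.symm] at h
  simp_rw [Function.apply_update (fun _ => g)]
  rw [h.tsum_eq]
  ring

lemma exists_logPlusL2_lt (ha : 0 ≤ a) (hx : ∀ i, 0 ≤ x i) (hs : Summable x) {i j : ι}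
    (hi : x i ≠ 0) (hj : x j ≠ 0) (hij : x i ≠ x j) :
    ∃ y : ι → ℝ, (∀ k, 0 ≤ y k) ∧ Summable y ∧ ∑' k, y k = ∑' k, x k ∧
      logPlusL2 a y < logPlusL2 a x := by
  classical
  have hne : i ≠ j := fun h => hij (h ▸ rfl)
  have hsq := summable_sq_of_nonneg hx hs
  set Q := ∑' k, x k ^ 2 - x i ^ 2 - x j ^ 2
  have hQ : 0 ≤ Q := by
    have := hsq.sum_le_tsum {i, j} fun k _ => sq_nonneg (x k)
    rw [sum_pair hne] at this
    linarith
  obtain ⟨A, B, hA, hB, hAB, hlt⟩ :=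
    exists_rebalance_lt ha ((hx i).lt_of_ne' hi) ((hx j).lt_of_ne' hj) hij hQ
  refine ⟨Function.update (Function.update x i A) j B, fun k => ?_,
    (hs.update i A).update j B, ?_, ?_⟩
  · simp only [Function.update_apply]
    split_ifs
    exacts [hB, hA, hx k]
  · have h := tsum_comp_update_update id hs hne A B
    simp only [id] at h
    linarith
  · unfold logPlusL2
    rw [tsum_comp_update_update (fun t => log (1 + t)) (summable_log_one_add_of_summable hs) hne,
      tsum_comp_update_update (· ^ 2) hsq hne]
    have hy2 : ∑' k, x k ^ 2 - x i ^ 2 - x j ^ 2 + A ^ 2 + B ^ 2 = Q + A ^ 2 + B ^ 2 := rfl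
    have hx2 : ∑' k, x k ^ 2 = Q + x i ^ 2 + x j ^ 2 := by ring
    rw [hy2, hx2]
    linarith

lemma logPlusL2_eq_equalSplitValue (hc : 0 ≤ c) (s : Finset ι) (h_on : ∀ i ∈ s, x i = c / #s)
    (h_off : ∀ i ∉ s, x i = 0) : logPlusL2 a x = equalSplitValue a c #s := by
  have hlog : ∑' i, log (1 + x i) = #s * log (1 + c / #s) := by
    rw [tsum_eq_sum fun i hi => by rw [h_off i hi, add_zero, log_one],
      sum_congr rfl fun i hi => by rw [h_on i hi], sum_const, nsmul_eq_mul]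
  have hsq : ∑' i, x i ^ 2 = #s * (c / #s) ^ 2 := by
    rw [tsum_eq_sum fun i hi => by rw [h_off i hi, zero_pow two_ne_zero],
      sum_congr rfl fun i hi => by rw [h_on i hi], sum_const, nsmul_eq_mul]
  have hroot : √(#s * (c / #s) ^ 2 : ℝ) = c / √(#s : ℝ) := by
    rw [sqrt_mul (Nat.cast_nonneg _), sqrt_sq (by positivity), mul_div_left_comm, sqrt_div_self',
      mul_one_div]
  rw [logPlusL2, equalSplitValue, hlog, hsq, hroot, mul_div_assoc]

lemma exists_logPlusL2_eq_equalSplitValue_of_forall_eq [Fintype ι] (hc : 0 < c)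
    (hsum : ∑ i, x i = c) (heq : ∀ i j, x i ≠ 0 → x j ≠ 0 → x i = x j) :
    ∃ N, 1 ≤ N ∧ logPlusL2 a x = equalSplitValue a c N := by
  classical
  set S := univ.filter (x · ≠ 0)
  have hsumS : ∑ i ∈ S, x i = c := (sum_filter_ne_zero _).trans hsum
  obtain ⟨k, hk⟩ : S.Nonempty := by
    by_contra h
    rw [not_nonempty_iff_eq_empty.1 h, sum_empty] at hsumS
    exact hc.ne hsumS
  have hconst : ∀ i ∈ S, x i = x k := fun i hi => heq i k (mem_filter.1 hi).2 (mem_filter.1 hk).2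
  have hcard : (#S : ℝ) ≠ 0 := Nat.cast_ne_zero.2 (card_ne_zero_of_mem hk)
  have hNk : #S * x k = c := by rw [← hsumS, sum_congr rfl hconst, sum_const, nsmul_eq_mul]
  refine ⟨#S, card_pos.2 ⟨k, hk⟩,
    logPlusL2_eq_equalSplitValue hc.le S (fun i hi => ?_) (fun i hi => ?_)⟩
  · rw [hconst i hi, ← hNk, mul_div_cancel_left₀ _ hcard]
  · by_contra h
    exact hi (mem_filter.2 ⟨mem_univ i, h⟩)

lemma exists_equalSplitValue_le_logPlusL2 [Fintype ι] (ha : 0 ≤ a) (hc : 0 < c)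
    (hx : ∀ i, 0 ≤ x i) (hsum : ∑ i, x i = c) :
    ∃ N, 1 ≤ N ∧ equalSplitValue a c N ≤ logPlusL2 a x := by
  set K : Set (ι → ℝ) := {w | 0 ≤ w} ∩ {w | ∑ i, w i = c}
  have hK : IsCompact K := by
    refine (isCompact_Icc (a := 0) (b := fun _ => c)).of_isClosed_subset
      ((isClosed_le continuous_const continuous_id).inter
        (isClosed_eq (continuous_finsetSum _ fun i _ => continuous_apply i) continuous_const))
      fun w hw => ⟨hw.1, fun i => ?_⟩
    rw [← hw.2]
    exact single_le_sum (fun j _ => hw.1 j) (mem_univ i)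
  have hcont : ContinuousOn (logPlusL2 a) K := by
    unfold logPlusL2
    simp only [tsum_fintype]
    refine ContinuousOn.add (continuousOn_finsetSum _ fun i _ => ContinuousOn.log (by fun_prop)
      fun w hw => ?_) (by fun_prop)
    have hwi : 0 ≤ w i := hw.1 i
    linarith
  obtain ⟨m, hmK, hmin⟩ := hK.exists_isMinOn ⟨x, hx, hsum⟩ hcont
  have heq : ∀ i j, m i ≠ 0 → m j ≠ 0 → m i = m j := by
    intro i j hi hj
    by_contra hij
    obtain ⟨y, hy, -, hysum, hlt⟩ := exists_logPlusL2_lt ha hmK.1 .of_finite hi hj hij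
    rw [tsum_fintype, tsum_fintype] at hysum
    exact (hmin ⟨hy, hysum.trans hmK.2⟩).not_gt hlt
  obtain ⟨N, hN, hval⟩ := exists_logPlusL2_eq_equalSplitValue_of_forall_eq hc hmK.2 heq
  exact ⟨N, hN, hval ▸ hmin ⟨hx, hsum⟩⟩

end

/-- Lumping the tail `∑_{i ≥ n} x i` into one entry costs at most `(1 + a)` times the tail. -/
lemma exists_fintype_logPlusL2_le {a : ℝ} (ha : 0 ≤ a) {x : ℕ → ℝ} (hx : ∀ i, 0 ≤ x i)
    (hs : Summable x) (n : ℕ) :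
    ∃ z : Option (Fin n) → ℝ, (∀ k, 0 ≤ z k) ∧ ∑ k, z k = ∑' i, x i ∧
      logPlusL2 a z ≤ logPlusL2 a x + (1 + a) * ∑' i, x (i + n) := by
  set T := ∑' i, x (i + n)
  have hT : 0 ≤ T := tsum_nonneg fun i => hx _
  refine ⟨fun k => k.elim T fun i => x i, ?_, ?_, ?_⟩
  · rintro (_ | i)
    exacts [hT, hx i]
  · simp only [Fintype.sum_option, Option.elim_none, Option.elim_some]
    rw [Fin.sum_univ_eq_sum_range (fun i => x i), add_comm]
    exact hs.sum_add_tsum_nat_add n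
  · unfold logPlusL2
    simp only [tsum_fintype, Fintype.sum_option, Option.elim_none, Option.elim_some]
    rw [Fin.sum_univ_eq_sum_range (fun i => log (1 + x i)),
      Fin.sum_univ_eq_sum_range (fun i => x i ^ 2)]
    have hlogT : log (1 + T) ≤ T := by linarith [log_le_sub_one_of_pos (by linarith : 0 < 1 + T)]
    have hlog := (summable_log_one_add_of_summable hs).sum_le_tsum (range n)
      fun i _ => log_nonneg (by linarith [hx i])
    have hsq := (summable_sq_of_nonneg hx hs).sum_le_tsum (range n) fun i _ => sq_nonneg (x i)
    have hroot : √(T ^ 2 + ∑ i ∈ range n, x i ^ 2) ≤ √(∑' i, x i ^ 2) + T :=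
      calc √(T ^ 2 + ∑ i ∈ range n, x i ^ 2) = √(∑ i ∈ range n, x i ^ 2 + T ^ 2) := by
            rw [add_comm]
        _ ≤ √(∑ i ∈ range n, x i ^ 2) + T :=
            sqrt_add_sq_le (sum_nonneg fun i _ => sq_nonneg (x i)) hT
        _ ≤ √(∑' i, x i ^ 2) + T := by gcongr
    linarith [mul_le_mul_of_nonneg_left hroot ha]

lemma equalSplitValue_nonneg {a c : ℝ} (ha : 0 ≤ a) (hc : 0 ≤ c) (N : ℕ) :
    0 ≤ equalSplitValue a c N :=
  add_nonneg (mul_nonneg N.cast_nonneg (log_nonneg (le_add_of_nonneg_right (by positivity))))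
    (by positivity)

lemma iInf_equalSplitValue_le_logPlusL2 {a c : ℝ} (ha : 0 ≤ a) (hc : 0 < c) {x : ℕ → ℝ}
    (hx : ∀ i, 0 ≤ x i) (hs : Summable x) (hsum : ∑' i, x i = c) :
    ⨅ N : {N : ℕ // 1 ≤ N}, equalSplitValue a c N ≤ logPlusL2 a x := by
  have hbdd : BddBelow (Set.range fun N : {N : ℕ // 1 ≤ N} => equalSplitValue a c N) :=
    ⟨0, by rintro _ ⟨N, rfl⟩; exact equalSplitValue_nonneg ha hc.le N⟩
  have hstep : ∀ n : ℕ, ⨅ N : {N : ℕ // 1 ≤ N}, equalSplitValue a c N ≤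
      logPlusL2 a x + (1 + a) * ∑' i, x (i + n) := by
    intro n
    obtain ⟨z, hz, hzsum, hzle⟩ := exists_fintype_logPlusL2_le ha hx hs n
    obtain ⟨N, hN, hNle⟩ := exists_equalSplitValue_le_logPlusL2 ha hc hz (hzsum.trans hsum)
    exact (ciInf_le hbdd ⟨N, hN⟩).trans (hNle.trans hzle)
  have hlim : Filter.Tendsto (fun n => logPlusL2 a x + (1 + a) * ∑' i, x (i + n))
      Filter.atTop (nhds (logPlusL2 a x)) := by
    simpa using tendsto_const_nhds.add ((tendsto_sum_nat_add x).const_mul (1 + a))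
  exact ge_of_tendsto' hlim hstep

lemma exists_logPlusL2_eq_equalSplitValue {a c : ℝ} (hc : 0 ≤ c) {N : ℕ} (hN : N ≠ 0) :
    ∃ x : ℕ → ℝ, (∀ i, 0 ≤ x i) ∧ Summable x ∧ ∑' i, x i = c ∧
      logPlusL2 a x = equalSplitValue a c N := by
  set x : ℕ → ℝ := fun i => if i ∈ range N then c / N else 0
  have h_on : ∀ i ∈ range N, x i = c / #(range N) := fun i hi => by
    simp only [x, if_pos hi, card_range]
  have h_off : ∀ i ∉ range N, x i = 0 := fun i hi => if_neg hi
  refine ⟨x, fun i => ?_, summable_of_ne_finset_zero h_off, ?_,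
    card_range N ▸ logPlusL2_eq_equalSplitValue hc _ h_on h_off⟩
  · simp only [x]
    split_ifs <;> positivity
  · rw [tsum_eq_sum h_off, sum_congr rfl h_on, sum_const, nsmul_eq_mul, card_range,
      mul_div_cancel₀ _ (Nat.cast_ne_zero.2 hN)]

theorem inf_log_sum_plus_l2
    (a c : ℝ) (ha : 0 < a) (hc : 0 < c) :
    (⨅ x : {x : ℕ → ℝ // (∀ i, 0 ≤ x i) ∧ Summable x ∧ ∑' i, x i = c},
        (∑' i, Real.log (1 + x.1 i)) + a * Real.sqrt (∑' i, (x.1 i) ^ 2)) =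
      (⨅ N : {N : ℕ // 1 ≤ N},
        (N.1 : ℝ) * Real.log (1 + c / (N.1 : ℝ)) + a * c / Real.sqrt (N.1 : ℝ)) ∧
    ∀ x : ℕ → ℝ, (∀ i, 0 ≤ x i) → Summable x → (∑' i, x i = c) →
      (∀ y : ℕ → ℝ, (∀ i, 0 ≤ y i) → Summable y → (∑' i, y i = c) →
        (∑' i, Real.log (1 + x i)) + a * Real.sqrt (∑' i, (x i) ^ 2) ≤
          (∑' i, Real.log (1 + y i)) + a * Real.sqrt (∑' i, (y i) ^ 2)) →
      ∀ i j, x i ≠ 0 → x j ≠ 0 → x i = x j := by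
  refine ⟨le_antisymm ?_ ?_, ?_⟩
  · have hbdd : BddBelow (Set.range fun x : {x : ℕ → ℝ // (∀ i, 0 ≤ x i) ∧ Summable x ∧
        ∑' i, x i = c} => logPlusL2 a x.1) :=
      ⟨0, by rintro _ ⟨x, rfl⟩; exact logPlusL2_nonneg ha.le x.2.1⟩
    refine le_ciInf fun N => ?_
    obtain ⟨x, hx, hs, hsum, hval⟩ :=
      exists_logPlusL2_eq_equalSplitValue (a := a) hc.le (Nat.one_le_iff_ne_zero.1 N.2)
    exact (ciInf_le hbdd ⟨x, hx, hs, hsum⟩).trans_eq hval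
  · obtain ⟨x, hx, hs, hsum, -⟩ := exists_logPlusL2_eq_equalSplitValue (a := a) hc.le one_ne_zero
    have : Nonempty {x : ℕ → ℝ // (∀ i, 0 ≤ x i) ∧ Summable x ∧ ∑' i, x i = c} :=
      ⟨⟨x, hx, hs, hsum⟩⟩
    exact le_ciInf fun x => iInf_equalSplitValue_le_logPlusL2 ha.le hc x.2.1 x.2.2.1 x.2.2.2
  · intro x hx hs hsum hmin i j hi hj
    by_contra hij
    obtain ⟨y, hy, hys, hysum, hlt⟩ := exists_logPlusL2_lt ha.le hx hs hi hj hij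
    exact (hmin y hy hys (hysum.trans hsum)).not_gt hlt
end

section
/- Fix an integer m ≥ 1 and positive reals a₁, …, a_m, and let f = e_{a₁} ⋆ ⋯ ⋆ e_{a_m} be the iterated convolution of the exponential densities. Then for all q₁ > 0 and q₂ > 0, the function f ⋆ e_{q₁} ⋆ e_{q₂} is differentiable on ℝ and for every x ∈ ℝ: (f ⋆ e_{q₁})(x) − (f ⋆ e_{q₂})(x) = (q₂ − q₁) · (f ⋆ e_{q₁} ⋆ e_{q₂})′(x). In probabilistic terms: if A = Σ_{i=1}^m a_i S_i and S', S'' are further independent mean-1 exponentials, then the density of A + q₁S' minus the density of A + q₂S'' equals (q₂ − q₁) times the derivative of the density of A + q₁S' + q₂S''. -/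
open MeasureTheory

/-- The exponential density of mean `q`: `e_q(x) = q⁻¹ e^{-x/q}` for `x ≥ 0`, `0` otherwise. -/
noncomputable def expDensity (q : ℝ) (x : ℝ) : ℝ :=
  if 0 ≤ x then q⁻¹ * Real.exp (-x / q) else 0

/-- Convolution of two real functions (w.r.t. Lebesgue measure). -/
noncomputable def convFn (f g : ℝ → ℝ) (x : ℝ) : ℝ :=
  ∫ y, f (x - y) * g y

/-- Iterated convolution of exponential densities with means given by the list:
the density of `Σ aᵢ Sᵢ` with `Sᵢ` i.i.d. mean-1 exponentials. -/
noncomputable def expConvList : List ℝ → ℝ → ℝ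
  | [] => fun _ => 0
  | [a] => expDensity a
  | a :: b :: l => convFn (expDensity a) (expConvList (b :: l))

/-!
Let `h = f ⋆ e_{q₁} ⋆ e_{q₂}`. Associativity and commutativity of convolution make `h`
symmetric in `q₁, q₂`. For integrable `g`, the explicit formula
`(g ⋆ e_q)(x) = q⁻¹ e^{-x/q} ∫_{-∞}^x g(u) e^{u/q} du` shows that `y = g ⋆ e_q` is continuous
and solves `q y' = g - y` wherever `g` is continuous. Reading `h` as `(f ⋆ e_{q₁}) ⋆ e_{q₂}`
and as `(f ⋆ e_{q₂}) ⋆ e_{q₁}` gives `q₂ h' = f ⋆ e_{q₁} - h` and `q₁ h' = f ⋆ e_{q₂} - h`;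
subtracting the two yields the identity.
-/

open ContinuousLinearMap
open scoped Convolution

section MulConvolution

variable {G : Type*} [AddCommGroup G] [MeasurableSpace G] [MeasurableAdd₂ G] [MeasurableNeg G]
  {μ : Measure G} [μ.IsAddLeftInvariant]

theorem convolution_mul_comm [μ.IsNegInvariant] (f g : G → ℝ) :
    f ⋆[mul ℝ ℝ, μ] g = g ⋆[mul ℝ ℝ, μ] f := by
  simpa using convolution_flip (L := mul ℝ ℝ) (μ := μ) (f := g) (g := f)

theorem convolution_mul_assoc_of_bounded [SFinite μ] {f g k : G → ℝ} (hf : Integrable f μ)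
    (hg : Integrable g μ) (hk : Integrable k μ) {C : ℝ} (hkC : ∀ x, ‖k x‖ ≤ C) :
    (f ⋆[mul ℝ ℝ, μ] g) ⋆[mul ℝ ℝ, μ] k = f ⋆[mul ℝ ℝ, μ] (g ⋆[mul ℝ ℝ, μ] k) := by
  funext x₀
  set w := (fun t => ‖g t‖) ⋆[mul ℝ ℝ, μ] (fun t => ‖k t‖) with hw
  have hw_int : Integrable w μ := hg.norm.integrable_convolution _ hk.norm
  -- A bounded `‖g‖ ⋆ ‖k‖` is what makes `‖f‖ ⋆ (‖g‖ ⋆ ‖k‖)` exist everywhere.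
  have hw_bound : ∀ x, ‖w x‖ ≤ (∫ t, ‖g t‖ ∂μ) * C := fun x => by
    have hw_nonneg : 0 ≤ w x := integral_nonneg fun t => by simp only [mul_apply']; positivity
    rw [Real.norm_of_nonneg hw_nonneg, hw, convolution_def, ← integral_mul_const]
    refine integral_mono_of_nonneg (.of_forall fun t => ?_) (hg.norm.mul_const C)
      (.of_forall fun t => ?_) <;> simp only [mul_apply']
    · positivity
    · gcongr; exact hkC _
  refine convolution_assoc _ _ _ _ (fun x y z => mul_assoc x y z) hf.1 hg.1 hk.1
    (hf.ae_convolution_exists _ hg) (hg.norm.ae_convolution_exists _ hk.norm) ?_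
  refine (hf.norm.mul_const ((∫ t, ‖g t‖ ∂μ) * C)).mono' ?_ (.of_forall fun t => ?_)
  · exact hf.1.norm.convolution_integrand_snd _ hw_int.1 x₀
  · rw [mul_apply', norm_mul, norm_norm]
    gcongr
    exact hw_bound _

theorem convolution_mul_right_comm_of_bounded [SFinite μ] [μ.IsNegInvariant] {f g k : G → ℝ}
    (hf : Integrable f μ) (hg : Integrable g μ) (hk : Integrable k μ) {C D : ℝ}
    (hgC : ∀ x, ‖g x‖ ≤ C) (hkD : ∀ x, ‖k x‖ ≤ D) :
    (f ⋆[mul ℝ ℝ, μ] g) ⋆[mul ℝ ℝ, μ] k = (f ⋆[mul ℝ ℝ, μ] k) ⋆[mul ℝ ℝ, μ] g := by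
  rw [convolution_mul_assoc_of_bounded hf hg hk hkD, convolution_mul_comm g,
    convolution_mul_assoc_of_bounded hf hk hg hgC]

end MulConvolution

open Set

lemma norm_expDensity_le {q : ℝ} (hq : 0 < q) (x : ℝ) : ‖expDensity q x‖ ≤ q⁻¹ := by
  unfold expDensity
  split_ifs with hx
  · rw [Real.norm_of_nonneg (by positivity)]
    exact mul_le_of_le_one_right (by positivity)
      (Real.exp_le_one_iff.2 (div_nonpos_of_nonpos_of_nonneg (by linarith) hq.le))
  · simpa using hq.le

lemma integrable_expDensity {q : ℝ} (hq : 0 < q) : Integrable (expDensity q) := by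
  have h_indicator : expDensity q = (Ici 0).indicator fun x => q⁻¹ * Real.exp (-q⁻¹ * x) := by
    ext x
    simp only [expDensity, indicator, mem_Ici]
    congr 3
    ring
  rw [h_indicator, integrable_indicator_iff measurableSet_Ici,
    integrableOn_Ici_iff_integrableOn_Ioi]
  exact (exp_neg_integrableOn_Ioi 0 (inv_pos.2 hq)).const_mul q⁻¹

lemma convFn_eq_convolution (f g : ℝ → ℝ) : convFn f g = f ⋆[mul ℝ ℝ, volume] g :=
  funext fun _ => convolution_mul_swap.symm

lemma integrable_expConvList : ∀ l : List ℝ, (∀ b ∈ l, 0 < b) → Integrable (expConvList l)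
  | [], _ => integrable_zero ℝ ℝ volume
  | [a], h => integrable_expDensity (h a (by simp))
  | a :: b :: l, h => by
    rw [expConvList, convFn_eq_convolution]
    exact (integrable_expDensity (h a (by simp))).integrable_convolution _
      (integrable_expConvList (b :: l) fun c hc => h c (List.mem_cons_of_mem a hc))

section Primitive

variable {H : ℝ → ℝ}

lemma continuous_integral_Iic (hH : ∀ c, IntegrableOn H (Iic c)) :
    Continuous fun t => ∫ u in Iic t, H u :=
  continuous_iff_continuousAt.2 fun x =>
    (hH (x + 1)).continuousOn_Iic_primitive_Iic.continuousAt (Iic_mem_nhds (lt_add_one x))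

lemma hasDerivAt_integral_Iic (hH : ∀ c, IntegrableOn H (Iic c)) {x : ℝ}
    (hx : ContinuousAt H x) : HasDerivAt (fun t => ∫ u in Iic t, H u) (H x) x := by
  have h_split :
      (fun t => ∫ u in Iic t, H u) = fun t => (∫ u in Iic 0, H u) + ∫ u in 0..t, H u := by
    ext t
    rw [← intervalIntegral.integral_Iic_sub_Iic (hH 0) (hH t), add_sub_cancel]
  rw [h_split]
  refine (intervalIntegral.integral_hasDerivAt_right ?_ ?_ hx).const_add _
  · exact ((hH (max 0 x)).mono_set fun u hu => hu.2).intervalIntegrable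
  · exact ⟨Iic (x + 1), Iic_mem_nhds (lt_add_one x), (hH (x + 1)).aestronglyMeasurable⟩

end Primitive

lemma convolution_expDensity_eq (g : ℝ → ℝ) (q x : ℝ) :
    (g ⋆[mul ℝ ℝ, volume] expDensity q) x
      = q⁻¹ * Real.exp (-x / q) * ∫ u in Iic x, g u * Real.exp (u / q) := by
  rw [convolution_def, ← integral_const_mul, ← integral_indicator measurableSet_Iic]
  congr 1 with u
  simp only [mul_apply', expDensity, indicator, mem_Iic, sub_nonneg]
  split_ifs
  · rw [show -(x - u) / q = -x / q + u / q by ring, Real.exp_add]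
    ring
  · ring

lemma integrableOn_Iic_mul_exp {g : ℝ → ℝ} (hg : Integrable g) {q : ℝ} (hq : 0 < q) (x : ℝ) :
    IntegrableOn (fun u => g u * Real.exp (u / q)) (Iic x) := by
  refine (hg.integrableOn.norm.mul_const (Real.exp (x / q))).mono'
    (hg.1.restrict.mul (by fun_prop : Continuous fun u => Real.exp (u / q)).aestronglyMeasurable)
    ?_
  rw [ae_restrict_iff' measurableSet_Iic]
  filter_upwards with u hu
  rw [norm_mul, Real.norm_of_nonneg (Real.exp_nonneg _)]
  gcongr
  exact hu

lemma continuous_convolution_expDensity {g : ℝ → ℝ} (hg : Integrable g) {q : ℝ} (hq : 0 < q) :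
    Continuous (g ⋆[mul ℝ ℝ, volume] expDensity q) := by
  rw [funext (convolution_expDensity_eq g q)]
  exact (by fun_prop : Continuous fun x => q⁻¹ * Real.exp (-x / q)).mul
    (continuous_integral_Iic (integrableOn_Iic_mul_exp hg hq))

lemma hasDerivAt_convolution_expDensity {g : ℝ → ℝ} (hg : Integrable g) {q : ℝ} (hq : 0 < q)
    {x : ℝ} (hx : ContinuousAt g x) :
    HasDerivAt (g ⋆[mul ℝ ℝ, volume] expDensity q)
      ((g x - (g ⋆[mul ℝ ℝ, volume] expDensity q) x) / q) x := by
  rw [funext (convolution_expDensity_eq g q)]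
  have h_exp : HasDerivAt (fun t => q⁻¹ * Real.exp (-t / q))
      (q⁻¹ * (Real.exp (-x / q) * (-1 / q))) x :=
    (((hasDerivAt_id x).neg.div_const q).exp).const_mul q⁻¹
  have h_prim := hasDerivAt_integral_Iic (integrableOn_Iic_mul_exp hg hq)
    (hx.mul (by fun_prop : Continuous fun u => Real.exp (u / q)).continuousAt)
  refine (h_exp.mul h_prim).congr_deriv ?_
  simp only [neg_div, Real.exp_neg]
  field_simp
  ring

theorem convolution_difference_identity_general
    (m : ℕ) (a : Fin m → ℝ) (ha : ∀ i, 0 < a i)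
    (q₁ q₂ : ℝ) (hq₁ : 0 < q₁) (hq₂ : 0 < q₂) :
    Differentiable ℝ
        (convFn (convFn (expConvList (List.ofFn a)) (expDensity q₁)) (expDensity q₂)) ∧
      ∀ x : ℝ,
        convFn (expConvList (List.ofFn a)) (expDensity q₁) x -
            convFn (expConvList (List.ofFn a)) (expDensity q₂) x =
          (q₂ - q₁) *
            deriv (convFn (convFn (expConvList (List.ofFn a)) (expDensity q₁))
              (expDensity q₂)) x := by
  have hf : Integrable (expConvList (List.ofFn a)) :=
    integrable_expConvList _ fun b hb => by
      obtain ⟨i, rfl⟩ := List.mem_ofFn.1 hb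
      exact ha i
  simp only [convFn_eq_convolution]
  set f := expConvList (List.ofFn a)
  set g₁ := f ⋆[mul ℝ ℝ, volume] expDensity q₁
  set g₂ := f ⋆[mul ℝ ℝ, volume] expDensity q₂
  set h := g₁ ⋆[mul ℝ ℝ, volume] expDensity q₂
  have h_symm : h = g₂ ⋆[mul ℝ ℝ, volume] expDensity q₁ :=
    convolution_mul_right_comm_of_bounded hf (integrable_expDensity hq₁)
      (integrable_expDensity hq₂) (norm_expDensity_le hq₁) (norm_expDensity_le hq₂)
  have hd₂ (x : ℝ) : HasDerivAt h ((g₁ x - h x) / q₂) x :=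
    hasDerivAt_convolution_expDensity (hf.integrable_convolution _ (integrable_expDensity hq₁))
      hq₂ (continuous_convolution_expDensity hf hq₁).continuousAt
  have hd₁ (x : ℝ) : HasDerivAt h ((g₂ x - h x) / q₁) x := by
    rw [h_symm]
    exact hasDerivAt_convolution_expDensity
      (hf.integrable_convolution _ (integrable_expDensity hq₂)) hq₁
      (continuous_convolution_expDensity hf hq₂).continuousAt
  refine ⟨fun x => (hd₂ x).differentiableAt, fun x => ?_⟩
  have h₁ : q₁ * deriv h x = g₂ x - h x := by
    rw [(hd₁ x).deriv]
    field_simp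
  have h₂ : q₂ * deriv h x = g₁ x - h x := by
    rw [(hd₂ x).deriv]
    field_simp
  linear_combination h₁ - h₂

theorem convolution_difference_identity
    (m : ℕ) (hm : 1 ≤ m) (a : Fin m → ℝ) (ha : ∀ i, 0 < a i)
    (q₁ q₂ : ℝ) (hq₁ : 0 < q₁) (hq₂ : 0 < q₂) :
    Differentiable ℝ
        (convFn (convFn (expConvList (List.ofFn a)) (expDensity q₁)) (expDensity q₂)) ∧
      ∀ x : ℝ,
        convFn (expConvList (List.ofFn a)) (expDensity q₁) x -
            convFn (expConvList (List.ofFn a)) (expDensity q₂) x =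
          (q₂ - q₁) *
            deriv (convFn (convFn (expConvList (List.ofFn a)) (expDensity q₁))
              (expDensity q₂)) x :=
  convolution_difference_identity_general m a ha q₁ q₂ hq₁ hq₂
end

section
/- For η > 6, define q_η : (0,∞) → ℝ by q_η(x) = Q( (x − η)/√(2x) ). Then q_η is strictly decreasing, q_η(x) → 1 as x → 0⁺, q_η(x) → 0 as x → ∞, q_η(η) = 1/2, and there exists x₀ ∈ (0, η) such that q_η is concave on (0, x₀] and convex on [x₀, ∞). -/
open MeasureTheory ProbabilityTheory

/-- The Gaussian Q-function `Q(y) = P[Z > y]` for `Z` standard normal. -/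
noncomputable def gaussianQ (y : ℝ) : ℝ :=
  (gaussianReal 0 1 (Set.Ioi y)).toReal

/-- The function `q_η(x) = Q((x - η)/√(2x))` for `x > 0`. -/
noncomputable def qEta (η x : ℝ) : ℝ :=
  gaussianQ ((x - η) / Real.sqrt (2 * x))

/-!
Write `q_η = Q ∘ g` with `g x = (x - η) / √(2x)`. Since `Q' = -φ` and `φ' y = -y φ y` for the
standard normal density `φ`, the chain rule gives `q_η' = -φ(g) g' < 0` and
`q_η'' = φ(g) (g g'² - g'') = φ(g) p / (2x)^(7/2)` with the cubic
`p x = (x - η)(x + η)² + 2x(x + 3η)`. The cubic is convex on `[0, ∞)` with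
`p 0 = -η³ < 0 < 8η² = p η`, so it has a zero `x₀ ∈ (0, η)`, is negative before it and positive
after it. The limits come from `g → -∞` as `x → 0⁺` and `g → ∞` as `x → ∞`, and
`q_η η = Q 0 = 1/2` by symmetry of `φ`.
-/

open Set Filter Topology Real
open scoped NNReal

lemma ConvexOn.neg_of_mem_Ioo {s : Set ℝ} {f : ℝ → ℝ} (hf : ConvexOn ℝ s f) {a b x : ℝ}
    (ha : a ∈ s) (hb : b ∈ s) (hfa : f a < 0) (hfb : f b ≤ 0) (hx : x ∈ Ioo a b) : f x < 0 := by
  by_contra! hfx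
  have := hf.lt_right_of_left_lt ha hb (Ioo_subset_openSegment hx) (hfa.trans_le hfx)
  linarith

lemma ConvexOn.pos_of_lt {s : Set ℝ} {f : ℝ → ℝ} (hf : ConvexOn ℝ s f) {a b x : ℝ}
    (ha : a ∈ s) (hx : x ∈ s) (hfa : f a < 0) (hfb : 0 ≤ f b) (hab : a < b) (hbx : b < x) :
    0 < f x :=
  hfb.trans_lt <| hf.lt_right_of_left_lt ha hx (Ioo_subset_openSegment ⟨hab, hbx⟩)
    (hfa.trans_le hfb)

lemma hasDerivAt_gaussianPDFReal (μ : ℝ) (v : ℝ≥0) (x : ℝ) :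
    HasDerivAt (gaussianPDFReal μ v) (-((x - μ) / v) * gaussianPDFReal μ v x) x := by
  have hexponent : HasDerivAt (fun y ↦ -(y - μ) ^ 2 / (2 * v)) (-((x - μ) / v)) x := by
    refine (((hasDerivAt_id' x).sub_const μ).fun_pow 2).fun_neg.div_const (2 * (v : ℝ))
      |>.congr_deriv ?_
    by_cases hv : (v : ℝ) = 0
    · simp [hv]
    · field_simp
      ring
  rw [gaussianPDFReal_def]
  exact (hexponent.exp.const_mul (√(2 * π * v))⁻¹).congr_deriv (by ring)

lemma gaussianQ_eq_one_sub_cdf (y : ℝ) : gaussianQ y = 1 - cdf (gaussianReal 0 1) y := by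
  rw [cdf_eq_real, ← probReal_compl_eq_one_sub measurableSet_Iic, compl_Iic, measureReal_def,
    gaussianQ]

lemma tendsto_gaussianQ_atTop : Tendsto gaussianQ atTop (𝓝 0) := by
  simpa [funext gaussianQ_eq_one_sub_cdf] using
    (tendsto_cdf_atTop (gaussianReal 0 1)).const_sub 1

lemma tendsto_gaussianQ_atBot : Tendsto gaussianQ atBot (𝓝 1) := by
  simpa [funext gaussianQ_eq_one_sub_cdf] using
    (tendsto_cdf_atBot (gaussianReal 0 1)).const_sub 1

lemma gaussianQ_eq_integral (y : ℝ) : gaussianQ y = ∫ t in Ioi y, gaussianPDFReal 0 1 t := by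
  rw [gaussianQ, gaussianReal_apply_eq_integral 0 one_ne_zero, ENNReal.toReal_ofReal]
  exact setIntegral_nonneg measurableSet_Ioi fun t _ ↦ gaussianPDFReal_nonneg 0 1 t

lemma gaussianQ_zero : gaussianQ 0 = 1 / 2 := by
  have hsymm : ∫ t in Iic 0, gaussianPDFReal 0 1 t = ∫ t in Ioi 0, gaussianPDFReal 0 1 t := by
    rw [← neg_zero, ← integral_comp_neg_Ioi]
    simp [gaussianPDFReal_def]
  have hint := integrable_gaussianPDFReal 0 1
  have htotal := intervalIntegral.integral_Iic_add_Ioi (b := 0) hint.integrableOn hint.integrableOn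
  rw [integral_gaussianPDFReal_eq_one 0 one_ne_zero, hsymm] at htotal
  rw [gaussianQ_eq_integral]
  linarith

lemma hasDerivAt_gaussianQ (y : ℝ) : HasDerivAt gaussianQ (-gaussianPDFReal 0 1 y) y := by
  have hcont : Continuous (gaussianPDFReal 0 1) := by
    rw [gaussianPDFReal_def]; fun_prop
  have hint := integrable_gaussianPDFReal 0 1
  have hQ : gaussianQ = fun u ↦ gaussianQ 0 - ∫ t in 0..u, gaussianPDFReal 0 1 t := by
    ext u
    rw [gaussianQ_eq_integral, gaussianQ_eq_integral,
      ← intervalIntegral.integral_Ioi_sub_Ioi' hint.integrableOn hint.integrableOn]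
    ring
  rw [hQ]
  exact (intervalIntegral.integral_hasDerivAt_right hint.intervalIntegrable
    (hcont.stronglyMeasurableAtFilter _ _) hcont.continuousAt).const_sub _

noncomputable def qEtaArg (η x : ℝ) : ℝ := (x - η) / √(2 * x)

noncomputable def qEtaArgDeriv (η x : ℝ) : ℝ := (x + η) / √(2 * x) ^ 3

noncomputable def qEtaDeriv (η x : ℝ) : ℝ :=
  -gaussianPDFReal 0 1 (qEtaArg η x) * qEtaArgDeriv η x

def qEtaPoly (η x : ℝ) : ℝ := (x - η) * (x + η) ^ 2 + 2 * x * (x + 3 * η)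

section Derivatives

variable {η x : ℝ}

lemma hasDerivAt_sqrt_two_mul (hx : 0 < x) : HasDerivAt (fun u ↦ √(2 * u)) (√(2 * x))⁻¹ x := by
  have hs : √(2 * x) ≠ 0 := by positivity
  refine ((hasDerivAt_id' x).const_mul 2).sqrt (by positivity) |>.congr_deriv ?_
  field_simp

lemma hasDerivAt_qEtaArg (hx : 0 < x) : HasDerivAt (qEtaArg η) (qEtaArgDeriv η x) x := by
  have hs : √(2 * x) ≠ 0 := by positivity
  have hs2 : √(2 * x) ^ 2 = 2 * x := sq_sqrt (by positivity)
  refine ((hasDerivAt_id' x).sub_const η).div (hasDerivAt_sqrt_two_mul hx) hs |>.congr_deriv ?_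
  rw [qEtaArgDeriv]
  field_simp
  linear_combination hs2

lemma hasDerivAt_qEtaArgDeriv (hx : 0 < x) :
    HasDerivAt (qEtaArgDeriv η) (-(x + 3 * η) / √(2 * x) ^ 5) x := by
  have hs : √(2 * x) ≠ 0 := by positivity
  have hs2 : √(2 * x) ^ 2 = 2 * x := sq_sqrt (by positivity)
  refine ((hasDerivAt_id' x).add_const η).div ((hasDerivAt_sqrt_two_mul hx).fun_pow 3)
    (pow_ne_zero 3 hs) |>.congr_deriv ?_
  field_simp
  linear_combination √(2 * x) ^ 2 * hs2

lemma hasDerivAt_qEta (hx : 0 < x) : HasDerivAt (qEta η) (qEtaDeriv η x) x :=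
  (hasDerivAt_gaussianQ _).comp x (hasDerivAt_qEtaArg hx)

lemma hasDerivAt_qEtaDeriv (hx : 0 < x) :
    HasDerivAt (qEtaDeriv η)
      (gaussianPDFReal 0 1 (qEtaArg η x) * (qEtaPoly η x / √(2 * x) ^ 7)) x := by
  have hs : √(2 * x) ≠ 0 := by positivity
  have hs2 : √(2 * x) ^ 2 = 2 * x := sq_sqrt (by positivity)
  have hpdf := (hasDerivAt_gaussianPDFReal 0 1 _).comp x (hasDerivAt_qEtaArg (η := η) hx)
  refine hpdf.fun_neg.mul (hasDerivAt_qEtaArgDeriv hx) |>.congr_deriv ?_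
  simp only [Function.comp_apply, sub_zero, NNReal.coe_one, div_one, qEtaPoly, qEtaArgDeriv]
  set φ := gaussianPDFReal 0 1 (qEtaArg η x)
  rw [qEtaArg]
  set s := √(2 * x)
  field_simp
  linear_combination φ * (x + 3 * η) * hs2

end Derivatives

lemma qEtaPoly_convexOn {η : ℝ} (hη : -2 ≤ η) : ConvexOn ℝ (Ici 0) (qEtaPoly η) := by
  have hexpand :
      qEtaPoly η = fun x ↦ x ^ 3 + (η + 2) * x ^ 2 + ((6 * η - η ^ 2) * x + -η ^ 3) := by
    ext x; rw [qEtaPoly]; ring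
  rw [hexpand]
  exact ((convexOn_pow 3).add ((convexOn_pow 2).smul (by linarith))).add
    (((LinearMap.mulLeft ℝ (6 * η - η ^ 2)).convexOn (convex_Ici 0)).add_const (-η ^ 3))

lemma exists_qEtaPoly_sign_change {η : ℝ} (hη : 0 < η) :
    ∃ x₀ ∈ Ioo 0 η, (∀ x ∈ Ioo 0 x₀, qEtaPoly η x < 0) ∧ ∀ x, x₀ < x → 0 < qEtaPoly η x := by
  have hp0 : qEtaPoly η 0 < 0 := by simp only [qEtaPoly]; nlinarith [pow_pos hη 3]
  have hpη : 0 < qEtaPoly η η := by simp only [qEtaPoly]; nlinarith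
  obtain ⟨x₀, hx₀, hpx₀⟩ := intermediate_value_Ioo hη.le
    (by unfold qEtaPoly; fun_prop : Continuous (qEtaPoly η)).continuousOn ⟨hp0, hpη⟩
  have hconv := qEtaPoly_convexOn (by linarith : -2 ≤ η)
  refine ⟨x₀, hx₀, fun x hx ↦ hconv.neg_of_mem_Ioo self_mem_Ici hx₀.1.le hp0 hpx₀.le hx,
    fun x hx ↦ hconv.pos_of_lt self_mem_Ici (hx₀.1.trans hx).le hp0 hpx₀.ge hx₀.1 hx⟩

section Shape

variable {η : ℝ}

lemma concaveOn_qEta_of_qEtaPoly_nonpos {D : Set ℝ} (hD : Convex ℝ D) (hD0 : D ⊆ Ioi 0)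
    (hp : ∀ x ∈ interior D, qEtaPoly η x ≤ 0) : ConcaveOn ℝ D (qEta η) :=
  concaveOn_of_hasDerivWithinAt2_nonpos hD
    (fun x hx ↦ (hasDerivAt_qEta (hD0 hx)).continuousAt.continuousWithinAt)
    (fun x hx ↦ (hasDerivAt_qEta (hD0 (interior_subset hx))).hasDerivWithinAt)
    (fun x hx ↦ (hasDerivAt_qEtaDeriv (hD0 (interior_subset hx))).hasDerivWithinAt)
    fun x hx ↦ mul_nonpos_of_nonneg_of_nonpos (gaussianPDFReal_nonneg ..)
      (div_nonpos_of_nonpos_of_nonneg (hp x hx) (by have := hD0 (interior_subset hx); positivity))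

lemma convexOn_qEta_of_qEtaPoly_nonneg {D : Set ℝ} (hD : Convex ℝ D) (hD0 : D ⊆ Ioi 0)
    (hp : ∀ x ∈ interior D, 0 ≤ qEtaPoly η x) : ConvexOn ℝ D (qEta η) :=
  convexOn_of_hasDerivWithinAt2_nonneg hD
    (fun x hx ↦ (hasDerivAt_qEta (hD0 hx)).continuousAt.continuousWithinAt)
    (fun x hx ↦ (hasDerivAt_qEta (hD0 (interior_subset hx))).hasDerivWithinAt)
    (fun x hx ↦ (hasDerivAt_qEtaDeriv (hD0 (interior_subset hx))).hasDerivWithinAt)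
    fun x hx ↦ mul_nonneg (gaussianPDFReal_nonneg ..)
      (div_nonneg (hp x hx) (by have := hD0 (interior_subset hx); positivity))

lemma strictAntiOn_qEta (hη : 0 ≤ η) : StrictAntiOn (qEta η) (Ioi 0) := by
  refine strictAntiOn_of_deriv_neg (convex_Ioi 0)
    (fun x hx ↦ (hasDerivAt_qEta hx).continuousAt.continuousWithinAt) fun x hx ↦ ?_
  rw [interior_Ioi] at hx
  rw [(hasDerivAt_qEta hx).deriv, qEtaDeriv, qEtaArgDeriv, neg_mul, neg_lt_zero]
  exact mul_pos (gaussianPDFReal_pos _ _ _ one_ne_zero)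
    (div_pos (by linarith [mem_Ioi.mp hx]) (by have := mem_Ioi.mp hx; positivity))

lemma tendsto_qEtaArg_nhdsGT_zero (hη : 0 < η) : Tendsto (qEtaArg η) (𝓝[>] 0) atBot := by
  have hsqrt : Tendsto (fun x : ℝ ↦ √(2 * x)) (𝓝[>] 0) (𝓝[>] 0) := by
    refine tendsto_nhdsWithin_iff.2 ⟨?_, ?_⟩
    · exact ((continuous_sqrt.comp (continuous_const_mul 2)).tendsto' 0 0 (by simp)).mono_left
        nhdsWithin_le_nhds
    · filter_upwards [self_mem_nhdsWithin] with x (hx : 0 < x)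
      exact mem_Ioi.2 (by positivity)
  have hnum : Tendsto (fun x : ℝ ↦ x - η) (𝓝[>] 0) (𝓝 (-η)) :=
    ((continuous_sub_right η).tendsto' 0 (-η) (by simp)).mono_left nhdsWithin_le_nhds
  exact hnum.neg_mul_atTop (by linarith) (tendsto_inv_nhdsGT_zero.comp hsqrt)

lemma tendsto_qEtaArg_atTop (η : ℝ) : Tendsto (qEtaArg η) atTop atTop := by
  have hsqrt : Tendsto (fun x : ℝ ↦ √(2 * x)) atTop atTop :=
    tendsto_sqrt_atTop.comp (tendsto_id.const_mul_atTop two_pos)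
  have h := (hsqrt.atTop_div_const two_pos).atTop_add (hsqrt.inv_tendsto_atTop.const_mul (-η))
  refine h.congr' ?_
  filter_upwards [eventually_gt_atTop 0] with x hx
  have hs2 : √(2 * x) ^ 2 = 2 * x := sq_sqrt (by positivity)
  have hs : √(2 * x) ≠ 0 := by positivity
  simp only [Pi.inv_apply, qEtaArg]
  field_simp
  linear_combination hs2

lemma tendsto_qEta_nhdsGT_zero (hη : 0 < η) : Tendsto (qEta η) (𝓝[>] 0) (𝓝 1) :=
  tendsto_gaussianQ_atBot.comp (tendsto_qEtaArg_nhdsGT_zero hη)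

lemma tendsto_qEta_atTop (η : ℝ) : Tendsto (qEta η) atTop (𝓝 0) :=
  tendsto_gaussianQ_atTop.comp (tendsto_qEtaArg_atTop η)

lemma qEta_self (η : ℝ) : qEta η η = 1 / 2 := by
  rw [qEta, sub_self, zero_div, gaussianQ_zero]

end Shape

theorem qEta_properties (η : ℝ) (hη : 6 < η) :
    StrictAntiOn (qEta η) (Set.Ioi 0) ∧
    Filter.Tendsto (qEta η) (nhdsWithin 0 (Set.Ioi 0)) (nhds 1) ∧
    Filter.Tendsto (qEta η) Filter.atTop (nhds 0) ∧
    qEta η η = 1 / 2 ∧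
    ∃ x₀ ∈ Set.Ioo (0 : ℝ) η,
      ConcaveOn ℝ (Set.Ioc 0 x₀) (qEta η) ∧ ConvexOn ℝ (Set.Ici x₀) (qEta η) := by
  have hη₀ : 0 < η := by linarith
  obtain ⟨x₀, hx₀, hneg, hpos⟩ := exists_qEtaPoly_sign_change hη₀
  refine ⟨strictAntiOn_qEta hη₀.le, tendsto_qEta_nhdsGT_zero hη₀, tendsto_qEta_atTop η,
    qEta_self η, x₀, hx₀, ?_, ?_⟩
  · refine concaveOn_qEta_of_qEtaPoly_nonpos (convex_Ioc 0 x₀) Ioc_subset_Ioi_self fun x hx ↦ ?_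
    rw [interior_Ioc] at hx
    exact (hneg x hx).le
  · refine convexOn_qEta_of_qEtaPoly_nonneg (convex_Ici x₀) (Ici_subset_Ioi.2 hx₀.1)
      fun x hx ↦ ?_
    rw [interior_Ici] at hx
    exact (hpos x hx).le
end
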